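/- arXiv:2002.00642 — 7 statements merged into one kernel-verified Lean document; each statement's English description precedes it below -/
import Mathlib

section
/- Let X be a compact Hausdorff space and Y an arbitrary set. Let f : X × Y → ℝ be such that for every y ∈ Y, x ↦ f(x,y) is lower semi-continuous on X. Assume f is convex on X (for any x₁, x₂ ∈ X and t ∈ [0,1] there exists x₀ ∈ X with f(x₀,y) ≤ t f(x₁,y) + (1-t) f(x₂,y) for all y) and concave on Y (for any y₁, y₂ ∈ Y and t ∈ [0,1] there exists y₀ ∈ Y with f(x,y₀) ≥ t f(x,y₁) + (1-t) f(x,y₂) for all x). Then min_{x∈X} sup_{y∈Y} f(x,y) = sup_{y∈Y} min_{x∈X} f(x,y). -/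
open Filter Topology Set

/-- Cluster point lemma: a sequence in a compact set with two lsc functions bounded
by null sequences yields a point where both are ≤ 0. -/
private lemma lsc_clusterPt {X : Type*} [TopologicalSpace X] {C : Set X} (hC : IsCompact C)
    {u : ℕ → X} (hu : ∀ n, u n ∈ C) {g h : X → ℝ}
    (hg : LowerSemicontinuous g) (hh : LowerSemicontinuous h)
    {r s : ℕ → ℝ} (hr : Tendsto r atTop (𝓝 0)) (hs : Tendsto s atTop (𝓝 0))
    (hgu : ∀ n, g (u n) ≤ r n) (hhu : ∀ n, h (u n) ≤ s n) :
    ∃ x ∈ C, g x ≤ 0 ∧ h x ≤ 0 := by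
  have hFC : Filter.map u atTop ≤ 𝓟 C := by
    rw [le_principal_iff, mem_map]
    exact Eventually.of_forall hu
  obtain ⟨x, hxC, hx⟩ := hC hFC
  have key : ∀ (φ : X → ℝ) (ρ : ℕ → ℝ), LowerSemicontinuous φ → Tendsto ρ atTop (𝓝 0) →
      (∀ n, φ (u n) ≤ ρ n) → φ x ≤ 0 := by
    intro φ ρ hφ hρ hφu
    by_contra hpos
    push_neg at hpos
    have hc : (0:ℝ) < φ x / 2 := by linarith
    have h1 : ∀ᶠ x' in 𝓝 x, φ x / 2 < φ x' := hφ x (φ x / 2) (by linarith)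
    haveI := hx.neBot
    have h2 : ∃ᶠ x' in 𝓝 x ⊓ Filter.map u atTop, φ x / 2 < φ x' :=
      (h1.filter_mono inf_le_left).frequently
    have h3 : ∃ᶠ n in atTop, φ x / 2 < φ (u n) := by
      rw [← frequently_map]
      exact h2.filter_mono inf_le_right
    have h4 : ∀ᶠ n in atTop, ρ n < φ x / 2 := hρ.eventually_lt_const hc
    obtain ⟨n, hn1, hn2⟩ := (h3.and_eventually h4).exists
    linarith [hφu n]
  exact ⟨x, hxC, key g r hg hr hgu, key h s hh hs hhu⟩

/-- A lower semicontinuous function attains its minimum on a nonempty compact set. -/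
private lemma lsc_exists_min_on {X : Type*} [TopologicalSpace X] {C : Set X} (hC : IsCompact C)
    (hne : C.Nonempty) {g : X → ℝ} (hg : LowerSemicontinuous g) :
    ∃ x ∈ C, ∀ x' ∈ C, g x ≤ g x' := by
  have hFIP : ∀ u : Finset C, (C ∩ ⋂ i ∈ u, {x | g x ≤ g i}).Nonempty := by
    intro u
    rcases u.eq_empty_or_nonempty with rfl | hune
    · simpa using hne
    · obtain ⟨i₀, hi₀, hmin⟩ := u.exists_min_image (fun i => g i) hune
      refine ⟨(i₀ : X), i₀.2, ?_⟩
      simp only [Set.mem_iInter, Set.mem_setOf_eq]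
      intro i hi
      exact hmin i hi
  obtain ⟨x, hxC, hx⟩ := hC.inter_iInter_nonempty (fun i : C => {x | g x ≤ g i})
    (fun i => hg.isClosed_preimage (g i)) hFIP
  refine ⟨x, hxC, fun x' hx' => ?_⟩
  simpa using Set.mem_iInter.1 hx ⟨x', hx'⟩

private lemma lsc_const_mul {X : Type*} [TopologicalSpace X] {g : X → ℝ}
    (hg : LowerSemicontinuous g) {a : ℝ} (ha : 0 ≤ a) :
    LowerSemicontinuous fun x => a * g x := by
  rcases ha.eq_or_lt with rfl | ha'
  · simp only [zero_mul]; exact lowerSemicontinuous_const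
  · intro x y hy
    have : y / a < g x := (div_lt_iff₀' ha').2 hy
    filter_upwards [hg x _ this] with x' hx'
    exact (div_lt_iff₀' ha').1 hx'

private lemma lsc_combo {X : Type*} [TopologicalSpace X] {g h : X → ℝ}
    (hg : LowerSemicontinuous g) (hh : LowerSemicontinuous h) {a b : ℝ}
    (ha : 0 ≤ a) (hb : 0 ≤ b) :
    LowerSemicontinuous fun x => a * g x + b * h x :=
  (lsc_const_mul hg ha).add (lsc_const_mul hh hb)

private def Aset {X : Type*} (C : Set X) (g h : X → ℝ) : Set ℝ :=
  {t | t ∈ Set.Icc (0:ℝ) 1 ∧ ∃ x ∈ C, g x ≤ 0 ∧ t * g x + (1 - t) * h x ≤ 0}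

private lemma Aset_upclosed {X : Type*} {C : Set X} {g h : X → ℝ}
    (hcon : ∀ x ∈ C, g x ≤ 0 → 0 < h x) {t t' : ℝ} (ht : t ∈ Aset C g h)
    (htt' : t ≤ t') (ht'1 : t' ≤ 1) : t' ∈ Aset C g h := by
  obtain ⟨⟨ht0, ht1⟩, x, hxC, hgx, hcombo⟩ := ht
  refine ⟨⟨le_trans ht0 htt', ht'1⟩, x, hxC, hgx, ?_⟩
  have hhx : 0 < h x := hcon x hxC hgx
  nlinarith

set_option maxHeartbeats 1000000 in
private lemma inf_mem_Aset {X : Type*} [TopologicalSpace X] {C : Set X} (hC : IsCompact C)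
    (hne : C.Nonempty) {g h : X → ℝ} (hg : LowerSemicontinuous g) (hh : LowerSemicontinuous h)
    (hcon : ∀ x ∈ C, g x ≤ 0 → 0 < h x) (h1A : (1:ℝ) ∈ Aset C g h) :
    sInf (Aset C g h) ∈ Aset C g h := by
  set A := Aset C g h with hA
  have hAne : A.Nonempty := ⟨1, h1A⟩
  have hAbdd : BddBelow A := ⟨0, fun t ht => ht.1.1⟩
  set τ := sInf A with hτ
  have hτ0 : 0 ≤ τ := le_csInf hAne fun t ht => ht.1.1
  have hτ1 : τ ≤ 1 := csInf_le hAbdd h1A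
  rcases eq_or_lt_of_le hτ1 with hτe | hτlt
  · rw [hτe]; exact h1A
  -- τ < 1
  obtain ⟨xg, hxgC, hxgmin⟩ := lsc_exists_min_on hC hne hg
  set m : ℝ := min (g xg) 0 with hm
  have hmle : ∀ x ∈ C, m ≤ g x := fun x hx => le_trans (min_le_left _ _) (hxgmin x hx)
  have hm0 : m ≤ 0 := min_le_right _ _
  set δ : ℝ := (1 - τ) / 2 with hδ
  have hδpos : 0 < δ := by simp only [hδ]; linarith
  set M : ℝ := (-m) / δ with hM
  have hMnn : 0 ≤ M := div_nonneg (by linarith) hδpos.le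
  set K : ℝ := max (M - m) 0 with hK
  have hKnn : 0 ≤ K := le_max_right _ _
  -- approximating sequence tₙ := τ + (1-τ)/(n+2) ∈ A
  set tseq : ℕ → ℝ := fun n => τ + (1 - τ) / (n + 2) with htseq
  have htmem : ∀ n, tseq n ∈ A := by
    intro n
    have hpos : 0 < (1 - τ) / ((n:ℝ) + 2) := div_pos (by linarith) (by positivity)
    have hlt : τ < tseq n := by simp only [htseq]; linarith
    have hle1 : tseq n ≤ 1 := by
      have h2 : (1:ℝ) ≤ (n:ℝ) + 2 := by
        have : (0:ℝ) ≤ (n:ℝ) := Nat.cast_nonneg n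
        linarith
      have : (1 - τ) / ((n:ℝ) + 2) ≤ (1 - τ) := by
        rw [div_le_iff₀ (by positivity)]
        nlinarith
      simp only [htseq]; linarith
    obtain ⟨a, haA, halt⟩ := exists_lt_of_csInf_lt hAne hlt
    exact Aset_upclosed hcon haA halt.le hle1
  choose xs hxsC hxsg hxscombo using fun n => (htmem n).2
  -- bounds
  have htn_bounds : ∀ n, τ < tseq n ∧ tseq n ≤ 1 ∧ 1 - tseq n ≥ δ := by
    intro n
    have hpos : 0 < (1 - τ) / ((n:ℝ) + 2) := div_pos (by linarith) (by positivity)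
    have h2 : (2:ℝ) ≤ (n:ℝ) + 2 := by
      have : (0:ℝ) ≤ (n:ℝ) := Nat.cast_nonneg n
      linarith
    have hhalf : (1 - τ) / ((n:ℝ) + 2) ≤ (1 - τ) / 2 := by
      apply div_le_div_of_nonneg_left (by linarith) (by norm_num) h2
    refine ⟨by simp only [htseq]; linarith, (htmem n).1.2, ?_⟩
    simp only [htseq, hδ]; linarith
  have hhbound : ∀ n, h (xs n) ≤ M := by
    intro n
    obtain ⟨h1, h2, h3⟩ := htn_bounds n
    have hgx := hxsg n
    have hco := hxscombo n
    have hmg := hmle _ (hxsC n)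
    have hstep : (1 - tseq n) * h (xs n) ≤ -m := by nlinarith [hτ0, h1, h2, hgx, hmg, hco]
    rcases le_or_gt (h (xs n)) 0 with hh0 | hh0
    · linarith
    · have hfin : h (xs n) ≤ -m / δ := by
        rw [le_div_iff₀ hδpos]
        nlinarith [hstep, hh0, h3]
      rw [hM]
      exact hfin
  -- combo at τ bounded by εₙ
  set ε : ℕ → ℝ := fun n => (1 - τ) / (n + 2) * K with hε
  have hεcombo : ∀ n, τ * g (xs n) + (1 - τ) * h (xs n) ≤ ε n := by
    intro n
    obtain ⟨h1, h2, h3⟩ := htn_bounds n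
    have hco := hxscombo n
    have hgx := hxsg n
    have hmg := hmle _ (hxsC n)
    have hhb := hhbound n
    have hdiff : tseq n - τ = (1 - τ) / (n + 2) := by simp [htseq]
    have hKge : h (xs n) - g (xs n) ≤ K := by
      have : M - m ≤ K := le_max_left _ _
      linarith
    have hexp : τ * g (xs n) + (1 - τ) * h (xs n)
        = tseq n * g (xs n) + (1 - tseq n) * h (xs n)
          + (tseq n - τ) * (h (xs n) - g (xs n)) := by ring
    rw [hexp, hdiff]
    have hpos : 0 ≤ (1 - τ) / ((n:ℝ) + 2) := div_nonneg (by linarith) (by positivity)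
    have hεn : ε n = (1 - τ) / ((n:ℝ) + 2) * K := by simp [hε]
    rw [hεn]
    have hmul := mul_le_mul_of_nonneg_left hKge hpos
    set d : ℝ := (1 - τ) / ((n:ℝ) + 2) with hd
    linarith [hmul, hco]
  have hεtend : Tendsto ε atTop (𝓝 0) := by
    have h1 : Tendsto (fun n : ℕ => (n:ℝ) + 2) atTop atTop := by
      exact tendsto_natCast_atTop_atTop.atTop_add tendsto_const_nhds
    have h2 : Tendsto (fun n : ℕ => (1 - τ) / ((n:ℝ) + 2)) atTop (𝓝 0) :=
      Tendsto.div_atTop tendsto_const_nhds h1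
    have := h2.mul_const K
    simpa using this
  -- apply the cluster lemma with φ = combo at τ, and g with bound 0
  obtain ⟨x, hxC, hgx0, hcombo0⟩ := lsc_clusterPt hC hxsC hg
    (lsc_combo hg hh hτ0 (by linarith : (0:ℝ) ≤ 1 - τ))
    (tendsto_const_nhds : Tendsto (fun _ : ℕ => (0:ℝ)) atTop (𝓝 0)) hεtend
    (fun n => hxsg n) hεcombo
  exact ⟨⟨hτ0, hτ1⟩, x, hxC, hgx0, hcombo0⟩

set_option maxHeartbeats 1000000 in
private lemma two_fun {X : Type*} [TopologicalSpace X] {C : Set X} (hC : IsCompact C)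
    (hne : C.Nonempty) {g h : X → ℝ} (hg : LowerSemicontinuous g) (hh : LowerSemicontinuous h)
    (hconvC : ∀ x₁ ∈ C, ∀ x₂ ∈ C, ∀ t ∈ Set.Icc (0:ℝ) 1, ∃ x₀ ∈ C,
      g x₀ ≤ t * g x₁ + (1 - t) * g x₂ ∧ h x₀ ≤ t * h x₁ + (1 - t) * h x₂)
    (hmix : ∀ t ∈ Set.Icc (0:ℝ) 1, ∃ x ∈ C, t * g x + (1 - t) * h x ≤ 0) :
    ∃ x ∈ C, g x ≤ 0 ∧ h x ≤ 0 := by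
  by_contra hcontra
  push_neg at hcontra
  have hcon : ∀ x ∈ C, g x ≤ 0 → 0 < h x := hcontra
  have hcon' : ∀ x ∈ C, h x ≤ 0 → 0 < g x := by
    intro x hx hhx
    by_contra hgx
    push_neg at hgx
    exact absurd hhx (hcon x hx hgx).not_ge
  have h1A : (1:ℝ) ∈ Aset C g h := by
    obtain ⟨x, hx, hco⟩ := hmix 1 ⟨zero_le_one, le_rfl⟩
    exact ⟨⟨zero_le_one, le_rfl⟩, x, hx, by linarith, by linarith⟩
  have h1A' : (1:ℝ) ∈ Aset C h g := by
    obtain ⟨x, hx, hco⟩ := hmix 0 ⟨le_rfl, zero_le_one⟩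
    exact ⟨⟨zero_le_one, le_rfl⟩, x, hx, by linarith, by linarith⟩
  have hτA := inf_mem_Aset hC hne hg hh hcon h1A
  have hσA := inf_mem_Aset hC hne hh hg hcon' h1A'
  obtain ⟨τ, hτ⟩ : ∃ τ, τ = sInf (Aset C g h) := ⟨_, rfl⟩
  obtain ⟨σ, hσ⟩ : ∃ σ, σ = sInf (Aset C h g) := ⟨_, rfl⟩
  rw [← hτ] at hτA
  rw [← hσ] at hσA
  have hτ0 : 0 ≤ τ := hτA.1.1
  have hτ1 : τ ≤ 1 := hτA.1.2
  have hσ0 : 0 ≤ σ := hσA.1.1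
  have hσ1 : σ ≤ 1 := hσA.1.2
  have hAbdd : BddBelow (Aset C g h) := ⟨0, fun t ht => ht.1.1⟩
  have hAbdd' : BddBelow (Aset C h g) := ⟨0, fun t ht => ht.1.1⟩
  -- τ + σ ≤ 1
  have hτσ : τ + σ ≤ 1 := by
    by_contra hgt
    push_neg at hgt
    set θ : ℝ := (τ + (1 - σ)) / 2 with hθ
    have hθ1 : 1 - σ < θ := by simp only [hθ]; linarith
    have hθ2 : θ < τ := by simp only [hθ]; linarith
    have hθmem : θ ∈ Set.Icc (0:ℝ) 1 := ⟨by linarith, by linarith⟩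
    obtain ⟨x, hx, hco⟩ := hmix θ hθmem
    have hcases : g x ≤ 0 ∨ h x ≤ 0 := by
      by_contra hboth
      push_neg at hboth
      nlinarith [hboth.1, hboth.2, hθmem.1, hθmem.2]
    rcases hcases with hgx | hhx
    · have : θ ∈ Aset C g h := ⟨hθmem, x, hx, hgx, hco⟩
      have := csInf_le hAbdd this
      rw [← hτ] at this
      linarith
    · have : 1 - θ ∈ Aset C h g :=
        ⟨⟨by linarith, by linarith⟩, x, hx, hhx, by linarith⟩
      have := csInf_le hAbdd' this
      rw [← hσ] at this
      linarith
  -- starting witnesses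
  obtain ⟨_, u₀, hu₀C, hu₀g, hu₀co⟩ := hτA
  have hvA : 1 - τ ∈ Aset C h g :=
    Aset_upclosed hcon' hσA (by linarith) (by linarith)
  obtain ⟨_, v₀, hv₀C, hv₀h, hv₀co'⟩ := hvA
  have hv₀co : τ * g v₀ + (1 - τ) * h v₀ ≤ 0 := by linarith
  -- invariant and bisection step
  set Inv : X × X → Prop := fun p => p.1 ∈ C ∧ p.2 ∈ C ∧ g p.1 ≤ 0 ∧ h p.2 ≤ 0 ∧
    τ * g p.1 + (1 - τ) * h p.1 ≤ 0 ∧ τ * g p.2 + (1 - τ) * h p.2 ≤ 0 with hInvDef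
  have step : ∀ p : X × X, ∃ q : X × X,
      Inv p → (Inv q ∧ h q.1 * g q.2 ≤ h p.1 * g p.2 / 2) := by
    intro p
    by_cases hp : Inv p
    · obtain ⟨hp1, hp2, hpg, hph, hpc1, hpc2⟩ := hp
      obtain ⟨w, hwC, hwg, hwh⟩ := hconvC p.1 hp1 p.2 hp2 (1/2) ⟨by norm_num, by norm_num⟩
      have hwcombo : τ * g w + (1 - τ) * h w ≤ 0 := by nlinarith [hτ0, hτ1, hwg, hwh]
      have hhu : 0 < h p.1 := hcon _ hp1 hpg
      have hgv : 0 < g p.2 := hcon' _ hp2 hph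
      by_cases hgw : g w ≤ 0
      · refine ⟨(w, p.2), fun _ => ⟨⟨hwC, hp2, hgw, hph, hwcombo, hpc2⟩, ?_⟩⟩
        have hhalf : h w ≤ h p.1 / 2 := by nlinarith [hwh, hph]
        nlinarith [mul_le_mul_of_nonneg_right hhalf hgv.le]
      · push_neg at hgw
        have hhw : h w ≤ 0 := by
          rcases eq_or_lt_of_le hτ1 with hτe | hτlt'
          · exfalso
            rw [← hτe] at hwcombo
            nlinarith
          · by_contra hhw0
            push_neg at hhw0
            nlinarith [mul_pos (by linarith : (0:ℝ) < 1 - τ) hhw0,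
              mul_nonneg hτ0 hgw.le]
        refine ⟨(p.1, w), fun _ => ⟨⟨hp1, hwC, hpg, hhw, hpc1, hwcombo⟩, ?_⟩⟩
        have hhalf : g w ≤ g p.2 / 2 := by nlinarith [hwg, hpg]
        nlinarith [mul_le_mul_of_nonneg_left hhalf hhu.le]
    · exact ⟨p, fun hinv => absurd hinv hp⟩
  choose nxt hnxt using step
  set seq : ℕ → X × X := fun n => nxt^[n] (u₀, v₀) with hseq
  have hseq0 : seq 0 = (u₀, v₀) := rfl
  have hseqS : ∀ n, seq (n + 1) = nxt (seq n) := by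
    intro n
    simp only [hseq, Function.iterate_succ_apply']
  have hInv : ∀ n, Inv (seq n) := by
    intro n
    induction n with
    | zero =>
      rw [hseq0]
      exact ⟨hu₀C, hv₀C, hu₀g, hv₀h, hu₀co, hv₀co⟩
    | succ n ih =>
      rw [hseqS]
      exact (hnxt _ ih).1
  set Q : ℕ → ℝ := fun n => h (seq n).1 * g (seq n).2 with hQ
  have hQpos : ∀ n, 0 < Q n := by
    intro n
    obtain ⟨h1, h2, h3, h4, _, _⟩ := hInv n
    exact mul_pos (hcon _ h1 h3) (hcon' _ h2 h4)
  have hQhalf : ∀ n, Q (n + 1) ≤ Q n / 2 := by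
    intro n
    have := (hnxt _ (hInv n)).2
    simp only [hQ]
    rw [hseqS]
    exact this
  have hQle : ∀ n, Q n ≤ Q 0 / 2 ^ n := by
    intro n
    induction n with
    | zero => simp
    | succ n ih =>
      have h1 := hQhalf n
      have h2 : Q n / 2 ≤ Q 0 / 2 ^ n / 2 := by linarith
      have h3 : Q 0 / 2 ^ n / 2 = Q 0 / 2 ^ (n + 1) := by
        rw [div_div, pow_succ]
      linarith
  set r : ℕ → ℝ := fun n => Real.sqrt (Q 0 / 2 ^ n) with hr
  have hrt : Tendsto r atTop (𝓝 0) := by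
    have h1 : Tendsto (fun n : ℕ => Q 0 * (1 / 2 : ℝ) ^ n) atTop (𝓝 0) := by
      have := tendsto_pow_atTop_nhds_zero_of_lt_one (by norm_num : (0:ℝ) ≤ 1/2)
        (by norm_num : (1/2:ℝ) < 1)
      simpa using this.const_mul (Q 0)
    have h2 : (fun n : ℕ => Q 0 / 2 ^ n) = fun n : ℕ => Q 0 * (1 / 2 : ℝ) ^ n := by
      funext n
      rw [one_div, inv_pow, div_eq_mul_inv]
    have h3 : Tendsto (fun n : ℕ => Q 0 / 2 ^ n) atTop (𝓝 0) := by rw [h2]; exact h1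
    have h4 := (Real.continuous_sqrt.tendsto 0).comp h3
    have h5 : Tendsto (fun n : ℕ => Real.sqrt (Q 0 / 2 ^ n)) atTop (𝓝 0) := by
      simpa only [Real.sqrt_zero, Function.comp_def] using h4
    exact h5
  have hrnn : ∀ n, 0 ≤ r n := fun n => Real.sqrt_nonneg _
  have halt : ∀ n, h (seq n).1 ≤ r n ∨ g (seq n).2 ≤ r n := by
    intro n
    by_contra hcontra2
    push_neg at hcontra2
    obtain ⟨hr1, hr2⟩ := hcontra2
    have hmul : r n * r n < Q n :=
      mul_lt_mul'' hr1 hr2 (hrnn n) (hrnn n)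
    have hsq : r n * r n = Q 0 / 2 ^ n := by
      simp only [hr]
      exact Real.mul_self_sqrt (le_of_lt (div_pos (hQpos 0) (by positivity)))
    linarith [hQle n]
  have hfreq : (∃ᶠ n in atTop, h (seq n).1 ≤ r n) ∨ ∃ᶠ n in atTop, g (seq n).2 ≤ r n :=
    Filter.frequently_or_distrib.1 ((Filter.Eventually.of_forall halt).frequently)
  rcases hfreq with hfr | hfr
  · obtain ⟨φ, hφmono, hφP⟩ := Filter.extraction_of_frequently_atTop hfr
    have hrφ : Tendsto (fun k => r (φ k)) atTop (𝓝 0) :=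
      hrt.comp hφmono.tendsto_atTop
    obtain ⟨x, hxC, hgx, hhx⟩ := lsc_clusterPt hC (fun k => (hInv (φ k)).1) hg hh
      (tendsto_const_nhds : Tendsto (fun _ : ℕ => (0:ℝ)) atTop (𝓝 0)) hrφ
      (fun k => (hInv (φ k)).2.2.1) (fun k => hφP k)
    exact absurd hhx (hcon x hxC hgx).not_ge
  · obtain ⟨φ, hφmono, hφP⟩ := Filter.extraction_of_frequently_atTop hfr
    have hrφ : Tendsto (fun k => r (φ k)) atTop (𝓝 0) :=
      hrt.comp hφmono.tendsto_atTop
    obtain ⟨x, hxC, hhx, hgx⟩ := lsc_clusterPt hC (fun k => (hInv (φ k)).2.1) hh hg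
      (tendsto_const_nhds : Tendsto (fun _ : ℕ => (0:ℝ)) atTop (𝓝 0)) hrφ
      (fun k => (hInv (φ k)).2.2.2.1) (fun k => hφP k)
    exact absurd hgx (hcon' x hxC hhx).not_ge
set_option maxHeartbeats 1000000 in
set_option maxHeartbeats 1000000 in
/-- Ky Fan's generalization of von Neumann's min-max theorem. -/
theorem stmt0 {X Y : Type*} [TopologicalSpace X] [CompactSpace X] [T2Space X]
    [Nonempty X] [Nonempty Y] (f : X → Y → ℝ)
    (hlsc : ∀ y : Y, LowerSemicontinuous fun x => f x y)
    (hconv : ∀ x₁ x₂ : X, ∀ t ∈ Set.Icc (0 : ℝ) 1,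
      ∃ x₀ : X, ∀ y : Y, f x₀ y ≤ t * f x₁ y + (1 - t) * f x₂ y)
    (hconc : ∀ y₁ y₂ : Y, ∀ t ∈ Set.Icc (0 : ℝ) 1,
      ∃ y₀ : Y, ∀ x : X, t * f x y₁ + (1 - t) * f x y₂ ≤ f x y₀) :
    ((⨅ x : X, ⨆ y : Y, (f x y : EReal)) = ⨆ y : Y, ⨅ x : X, (f x y : EReal)) ∧
      ∃ x₀ : X, (⨆ y : Y, (f x₀ y : EReal)) = ⨆ y : Y, ⨅ x : X, (f x y : EReal) := by
  classical
  have hmin : ∀ y : Y, ∃ x : X, ∀ x' : X, f x y ≤ f x' y := by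
    intro y
    obtain ⟨x, -, hx⟩ := lsc_exists_min_on isCompact_univ
      ⟨Classical.arbitrary X, trivial⟩ (hlsc y)
    exact ⟨x, fun x' => hx x' trivial⟩
  choose xm hxm using hmin
  set β : EReal := ⨆ y : Y, ⨅ x : X, (f x y : EReal) with hβ
  have hinf_eq : ∀ y : Y, (⨅ x : X, (f x y : EReal)) = (f (xm y) y : EReal) := by
    intro y
    refine le_antisymm (iInf_le _ _) ?_
    exact le_iInf fun x' => EReal.coe_le_coe_iff.2 (hxm y x')
  have hlow : β ≤ ⨅ x : X, ⨆ y : Y, (f x y : EReal) :=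
    le_iInf fun x => iSup_mono fun y => iInf_le _ x
  have main : ∃ x₀ : X, ∀ y : Y, (f x₀ y : EReal) ≤ β := by
    by_cases htop : β = ⊤
    · exact ⟨Classical.arbitrary X, fun y => htop ▸ le_top⟩
    · have y₀ := Classical.arbitrary Y
      have hbot : β ≠ ⊥ := by
        have h1 : (⨅ x : X, (f x y₀ : EReal)) ≤ β := by
          rw [hβ]; exact le_iSup (fun y : Y => ⨅ x : X, (f x y : EReal)) y₀
        rw [hinf_eq y₀] at h1
        exact (lt_of_lt_of_le (EReal.bot_lt_coe _) h1).ne'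
      set b : ℝ := β.toReal with hbdef
      have hbe : (b : EReal) = β := EReal.coe_toReal htop hbot
      have hb1 : ∀ y : Y, f (xm y) y ≤ b := by
        intro y
        have h1 : (⨅ x : X, (f x y : EReal)) ≤ β := by
          rw [hβ]; exact le_iSup (fun y : Y => ⨅ x : X, (f x y : EReal)) y
        rw [hinf_eq y, ← hbe] at h1
        exact EReal.coe_le_coe_iff.1 h1
      have hlscsub : ∀ y : Y, LowerSemicontinuous fun x => f x y - b := by
        intro y x z hz
        simp only at hz
        filter_upwards [hlsc y x (z + b) (by linarith)] with x' hx'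
        linarith
      have claimN : ∀ n : ℕ, ∀ F : Finset Y, F.card ≤ n → ∃ x : X, ∀ y ∈ F, f x y ≤ b := by
        intro n
        induction n with
        | zero =>
          intro F hF
          have hFe : F = ∅ := Finset.card_eq_zero.1 (Nat.le_zero.1 hF)
          subst hFe
          exact ⟨Classical.arbitrary X, by simp⟩
        | succ n ih =>
          intro F hF
          by_cases hc : F.card ≤ n
          · exact ih F hc
          push_neg at hc
          have hcard : F.card = n + 1 := le_antisymm hF hc
          rcases Nat.eq_zero_or_pos n with rfl | hn
          · obtain ⟨a, rfl⟩ := Finset.card_eq_one.1 hcard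
            exact ⟨xm a, by simpa using hb1 a⟩
          obtain ⟨a, ha, b', hb', hab⟩ := Finset.one_lt_card.1 (by omega : 1 < F.card)
          set G : Finset Y := (F.erase a).erase b' with hG
          have hGcard : G.card = n - 1 := by
            have h1 : b' ∈ F.erase a := Finset.mem_erase.2 ⟨Ne.symm hab, hb'⟩
            rw [hG, Finset.card_erase_of_mem h1, Finset.card_erase_of_mem ha, hcard]
            omega
          set C : Set X := ⋂ y ∈ G, (fun x => f x y) ⁻¹' Set.Iic b with hCdef
          have hmemC : ∀ x : X, x ∈ C ↔ ∀ y ∈ G, f x y ≤ b := by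
            intro x
            simp [hCdef]
          have hCclosed : IsClosed C :=
            isClosed_biInter fun y _ => (hlsc y).isClosed_preimage b
          have hCcompact : IsCompact C := hCclosed.isCompact
          have hmix : ∀ t ∈ Set.Icc (0:ℝ) 1, ∃ x ∈ C,
              t * (f x a - b) + (1 - t) * (f x b' - b) ≤ 0 := by
            intro t ht
            obtain ⟨y₁, hy₁⟩ := hconc a b' t ht
            obtain ⟨x, hx⟩ := ih (insert y₁ G) (by
              have := Finset.card_insert_le y₁ G
              omega)
            refine ⟨x, (hmemC x).2 fun y hy => hx y (Finset.mem_insert_of_mem hy), ?_⟩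
            have h1 := hx y₁ (Finset.mem_insert_self _ _)
            have h2 := hy₁ x
            nlinarith [ht.1, ht.2]
          have hCne : C.Nonempty := by
            obtain ⟨x, hx, -⟩ := hmix 0 ⟨le_rfl, zero_le_one⟩
            exact ⟨x, hx⟩
          have hconvC : ∀ x₁ ∈ C, ∀ x₂ ∈ C, ∀ t ∈ Set.Icc (0:ℝ) 1, ∃ x₀ ∈ C,
              (f x₀ a - b) ≤ t * (f x₁ a - b) + (1 - t) * (f x₂ a - b) ∧
              (f x₀ b' - b) ≤ t * (f x₁ b' - b) + (1 - t) * (f x₂ b' - b) := by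
            intro x₁ hx₁ x₂ hx₂ t ht
            obtain ⟨x₀, hx₀⟩ := hconv x₁ x₂ t ht
            obtain ⟨ht0, ht1⟩ := ht
            refine ⟨x₀, (hmemC x₀).2 fun y hy => ?_, ?_, ?_⟩
            · have h1 := (hmemC x₁).1 hx₁ y hy
              have h2 := (hmemC x₂).1 hx₂ y hy
              have h3 := hx₀ y
              nlinarith
            · have h3 := hx₀ a
              nlinarith
            · have h3 := hx₀ b'
              nlinarith
          obtain ⟨x, hxC, hga, hgb⟩ := two_fun hCcompact hCne
            (hlscsub a) (hlscsub b') hconvC hmix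
          refine ⟨x, fun y hy => ?_⟩
          by_cases hya : y = a
          · subst hya; linarith
          by_cases hyb : y = b'
          · subst hyb; linarith
          have hyG : y ∈ G := by
            rw [hG]
            exact Finset.mem_erase.2 ⟨hyb, Finset.mem_erase.2 ⟨hya, hy⟩⟩
          exact (hmemC x).1 hxC y hyG
      obtain ⟨x₀, -, hx₀⟩ := isCompact_univ.inter_iInter_nonempty
        (fun y : Y => (fun x => f x y) ⁻¹' Set.Iic b)
        (fun y => (hlsc y).isClosed_preimage b)
        (fun u => by
          obtain ⟨x, hx⟩ := claimN u.card u le_rfl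
          refine ⟨x, trivial, ?_⟩
          simp only [Set.mem_iInter, Set.mem_preimage, Set.mem_Iic]
          exact hx)
      refine ⟨x₀, fun y => ?_⟩
      have hy : f x₀ y ≤ b := by
        simpa using Set.mem_iInter.1 hx₀ y
      rw [← hbe]
      exact EReal.coe_le_coe_iff.2 hy
  obtain ⟨x₀, hx₀⟩ := main
  constructor
  · exact le_antisymm (iInf_le_of_le x₀ (iSup_le hx₀)) hlow
  · exact ⟨x₀, le_antisymm (iSup_le hx₀) (iSup_mono fun y => iInf_le _ x₀)⟩
end

section
/- Let Y be a convex subset of a topological vector space, ℓ a positive integer, and g₁,…,g_ℓ : Y → ℝ concave functions. Let Δ_ℓ = {(q₁,…,q_ℓ) ∈ ℝ^ℓ : qᵢ ≥ 0, Σ qᵢ = 1} and define P(q₁,…,q_ℓ) = sup_{y∈Y} Σᵢ qᵢ gᵢ(y). Then min over Δ_ℓ of P equals sup_{y∈Y} min{g₁(y),…,g_ℓ(y)}. -/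
open Finset

/-- Separation step: for every ε > 0 there is q in the simplex with
`∑ qᵢ gᵢ(y) ≤ c + ε` for all `y ∈ s`, where `c` bounds all the mins. -/
lemma sep_lemma {E : Type*} [AddCommGroup E] [Module ℝ E] [TopologicalSpace E]
    (ℓ : ℕ) (hℓ : 0 < ℓ) (s : Set E) (hs : Convex ℝ s) (hsne : s.Nonempty)
    (g : Fin ℓ → E → ℝ) (hg : ∀ i, ConcaveOn ℝ s (g i))
    (c : ℝ) (hc : ∀ y ∈ s, ∃ i, g i y ≤ c) (ε : ℝ) (hε : 0 < ε) :
    ∃ q ∈ stdSimplex ℝ (Fin ℓ), ∀ y ∈ s, ∑ i, q i * g i y ≤ c + ε := by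
  haveI : Nonempty (Fin ℓ) := Fin.pos_iff_nonempty.mp hℓ
  set C : Set (Fin ℓ → ℝ) := {z | ∃ y ∈ s, ∀ i, z i < g i y} with hC
  obtain ⟨y₀, hy₀⟩ := hsne
  have hz₀ : (fun i => g i y₀ - 1) ∈ C := ⟨y₀, hy₀, fun i => by simp⟩
  have hCconv : Convex ℝ C := by
    rintro z₁ ⟨y₁, hy₁, h₁⟩ z₂ ⟨y₂, hy₂, h₂⟩ a b ha hb hab
    rcases eq_or_lt_of_le ha with rfl | ha'
    · simp only [zero_add] at hab; subst hab
      refine ⟨y₂, hy₂, fun i => by simpa using h₂ i⟩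
    rcases eq_or_lt_of_le hb with rfl | hb'
    · simp only [add_zero] at hab; subst hab
      refine ⟨y₁, hy₁, fun i => by simpa using h₁ i⟩
    refine ⟨a • y₁ + b • y₂, hs hy₁ hy₂ ha hb hab, fun i => ?_⟩
    have h1 : a * z₁ i < a * g i y₁ := (mul_lt_mul_iff_right₀ ha').2 (h₁ i)
    have h2 : b * z₂ i < b * g i y₂ := (mul_lt_mul_iff_right₀ hb').2 (h₂ i)
    have hcc : a * g i y₁ + b * g i y₂ ≤ g i (a • y₁ + b • y₂) := by
      simpa [smul_eq_mul] using (hg i).2 hy₁ hy₂ ha hb hab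
    have : a * z₁ i + b * z₂ i < g i (a • y₁ + b • y₂) := by linarith
    simpa [smul_eq_mul] using this
  have hCopen : IsOpen C := by
    have : C = ⋃ y ∈ s, ⋂ i, (fun z : Fin ℓ → ℝ => z i) ⁻¹' Set.Iio (g i y) := by
      ext z; simp [hC, Set.mem_iUnion, Set.mem_iInter]
    rw [this]
    exact isOpen_biUnion fun y _ =>
      isOpen_iInter_of_finite fun i => (isOpen_Iio).preimage (continuous_apply i)
  set w : Fin ℓ → ℝ := fun _ => c + ε with hw
  have hwC : w ∉ C := by
    rintro ⟨y, hy, hlt⟩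
    obtain ⟨i, hi⟩ := hc y hy
    have := hlt i
    simp only [hw] at this
    linarith
  obtain ⟨f, hf⟩ := geometric_hahn_banach_open_point hCconv hCopen hwC
  set a : Fin ℓ → ℝ := fun i => f (fun j => if i = j then 1 else 0) with ha
  have hfz : ∀ z : Fin ℓ → ℝ, f z = ∑ i, z i * a i := by
    intro z
    conv_lhs => rw [pi_eq_sum_univ z, map_sum]
    exact Finset.sum_congr rfl fun i _ => by rw [map_smul, smul_eq_mul]
  -- each a i is nonneg
  have hanonneg : ∀ i, 0 ≤ a i := by
    intro i
    by_contra h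
    push_neg at h
    have hfz₀ : f (fun i => g i y₀ - 1) < f w := hf _ hz₀
    set e : Fin ℓ → ℝ := fun j => if i = j then 1 else 0 with he
    set t : ℝ := (f w - f (fun i => g i y₀ - 1)) / (-a i) with ht
    have htpos : 0 < t := div_pos (by linarith) (by linarith)
    have hmem : ((fun i => g i y₀ - 1) - t • e) ∈ C := by
      refine ⟨y₀, hy₀, fun j => ?_⟩
      show g j y₀ - 1 - t * e j < g j y₀
      have : 0 ≤ t * e j := by
        rw [he]; dsimp only; split <;> simp [le_of_lt htpos]
      linarith
    have hlt := hf _ hmem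
    rw [map_sub, map_smul, smul_eq_mul] at hlt
    have hfe : f e = a i := rfl
    rw [hfe] at hlt
    have hne' : a i ≠ 0 := by linarith
    have heq : t * a i = -(f w - f (fun i => g i y₀ - 1)) := by
      rw [ht, div_mul_eq_mul_div, mul_comm, mul_div_assoc, div_neg, mul_neg,
        mul_comm (a i), div_mul_cancel₀ _ hne']
    rw [heq] at hlt
    linarith
  have hfz₀w : f (fun i => g i y₀ - 1) < f w := hf _ hz₀
  have hSpos : 0 < ∑ i, a i := by
    rcases (sum_nonneg fun i _ => hanonneg i).lt_or_eq with h | h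
    · exact h
    · exfalso
      have hall : ∀ i ∈ univ, a i = 0 :=
        (sum_eq_zero_iff_of_nonneg fun i _ => hanonneg i).1 h.symm
      have h1 : f (fun i => g i y₀ - 1) = 0 := by
        rw [hfz]; exact sum_eq_zero fun i _ => by rw [hall i (mem_univ i), mul_zero]
      have h2 : f w = 0 := by
        rw [hfz]; exact sum_eq_zero fun i _ => by rw [hall i (mem_univ i), mul_zero]
      rw [h1, h2] at hfz₀w; exact lt_irrefl _ hfz₀w
  set S := ∑ i, a i with hS
  refine ⟨fun i => a i / S, ⟨fun i => div_nonneg (hanonneg i) hSpos.le, ?_⟩, ?_⟩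
  · rw [← Finset.sum_div, ← hS, div_self hSpos.ne']
  · intro y hy
    have key : ∀ δ : ℝ, 0 < δ → ∑ i, g i y * a i - δ * S < (c + ε) * S := by
      intro δ hδ
      have hmem : (fun i => g i y - δ) ∈ C :=
        ⟨y, hy, fun i => by show g i y - δ < g i y; linarith⟩
      have := hf _ hmem
      rw [hfz, hfz] at this
      have hrw : ∑ i, (g i y - δ) * a i = ∑ i, g i y * a i - δ * S := by
        rw [hS, Finset.mul_sum, ← Finset.sum_sub_distrib]
        exact Finset.sum_congr rfl fun i _ => by ring
      have hrw2 : ∑ i, w i * a i = (c + ε) * S := by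
        rw [hS, Finset.mul_sum]
      rw [hrw] at this; rw [← hrw2]; exact this
    have hle : ∑ i, g i y * a i ≤ (c + ε) * S := by
      by_contra h
      push_neg at h
      have := key ((∑ i, g i y * a i - (c + ε) * S) / S / 2)
        (div_pos (div_pos (by linarith) hSpos) two_pos)
      have hd : (∑ i, g i y * a i - (c + ε) * S) / S / 2 * S
          = (∑ i, g i y * a i - (c + ε) * S) / 2 := by field_simp
      rw [hd] at this
      linarith
    calc ∑ i, a i / S * g i y = (∑ i, g i y * a i) / S := by
          rw [Finset.sum_div]; exact Finset.sum_congr rfl fun i _ => by ring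
      _ ≤ c + ε := by rw [div_le_iff₀ hSpos]; exact hle

open Filter Topology

/-- Attainment: there is q₀ in the simplex with `∑ q₀ᵢ gᵢ(y) ≤ c` for all `y ∈ s`. -/
lemma attain_lemma {E : Type*} [AddCommGroup E] [Module ℝ E] [TopologicalSpace E]
    (ℓ : ℕ) (s : Set E) (g : Fin ℓ → E → ℝ) (c : ℝ)
    (hsep : ∀ ε : ℝ, 0 < ε → ∃ q ∈ stdSimplex ℝ (Fin ℓ), ∀ y ∈ s, ∑ i, q i * g i y ≤ c + ε) :
    ∃ q₀ ∈ stdSimplex ℝ (Fin ℓ), ∀ y ∈ s, ∑ i, q₀ i * g i y ≤ c := by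
  choose q hqmem hq using fun n : ℕ => hsep (1 / (n + 1)) (by positivity)
  obtain ⟨q₀, hq₀mem, φ, hφ, hconv⟩ :=
    (isCompact_stdSimplex ℝ (Fin ℓ)).tendsto_subseq hqmem
  refine ⟨q₀, hq₀mem, fun y hy => ?_⟩
  have h1 : Tendsto (fun n => ∑ i, q (φ n) i * g i y) atTop (𝓝 (∑ i, q₀ i * g i y)) :=
    tendsto_finset_sum _ fun i _ => ((tendsto_pi_nhds.mp hconv) i).mul_const _
  have h2 : Tendsto (fun n : ℕ => c + 1 / ((φ n : ℝ) + 1)) atTop (𝓝 (c + 0)) :=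
    tendsto_const_nhds.add
      (tendsto_one_div_add_atTop_nhds_zero_nat.comp hφ.tendsto_atTop)
  rw [add_zero] at h2
  exact le_of_tendsto_of_tendsto' h1 h2 fun n => by
    simpa using hq (φ n) y hy

/-- Minimax corollary: the minimum over the simplex of the support function
`P(q) = sup_y Σ qᵢ gᵢ(y)` equals `sup_y min_i gᵢ(y)`. -/
theorem stmt1 {E : Type*} [AddCommGroup E] [Module ℝ E] [TopologicalSpace E]
    (ℓ : ℕ) (hℓ : 0 < ℓ) (s : Set E) (hs : Convex ℝ s) (hsne : s.Nonempty)
    (g : Fin ℓ → E → ℝ) (hg : ∀ i, ConcaveOn ℝ s (g i)) :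
    ((⨅ q : stdSimplex ℝ (Fin ℓ), ⨆ y : s,
        ((∑ i, (q : Fin ℓ → ℝ) i * g i (y : E) : ℝ) : EReal))
        = ⨆ y : s, ⨅ i : Fin ℓ, ((g i (y : E) : ℝ) : EReal)) ∧
      ∃ q₀ ∈ stdSimplex ℝ (Fin ℓ),
        (⨆ y : s, ((∑ i, q₀ i * g i (y : E) : ℝ) : EReal))
          = ⨆ y : s, ⨅ i : Fin ℓ, ((g i (y : E) : ℝ) : EReal) := by
  haveI : Nonempty (Fin ℓ) := Fin.pos_iff_nonempty.mp hℓ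
  haveI : Nonempty s := hsne.to_subtype
  set v : EReal := ⨆ y : s, ⨅ i : Fin ℓ, ((g i (y : E) : ℝ) : EReal) with hv
  have easy : ∀ q ∈ stdSimplex ℝ (Fin ℓ), ∀ y : s,
      (⨅ i : Fin ℓ, ((g i (y : E) : ℝ) : EReal)) ≤ ((∑ i, q i * g i (y : E) : ℝ) : EReal) := by
    intro q hq y
    obtain ⟨i₀, _, hi₀⟩ := Finset.exists_min_image univ (fun i => g i (y : E)) univ_nonempty
    have hreal : g i₀ (y : E) ≤ ∑ i, q i * g i (y : E) := by
      have hsum : ∑ i, q i * g i₀ (y : E) ≤ ∑ i, q i * g i (y : E) :=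
        Finset.sum_le_sum fun i _ => mul_le_mul_of_nonneg_left (hi₀ i (mem_univ i)) (hq.1 i)
      calc g i₀ (y : E) = (∑ i, q i) * g i₀ (y : E) := by rw [hq.2, one_mul]
        _ = ∑ i, q i * g i₀ (y : E) := Finset.sum_mul _ _ _
        _ ≤ _ := hsum
    calc (⨅ i : Fin ℓ, ((g i (y : E) : ℝ) : EReal)) ≤ ((g i₀ (y : E) : ℝ) : EReal) := iInf_le _ i₀
      _ ≤ _ := EReal.coe_le_coe_iff.2 hreal
  have easy2 : ∀ q ∈ stdSimplex ℝ (Fin ℓ),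
      v ≤ ⨆ y : s, ((∑ i, q i * g i (y : E) : ℝ) : EReal) := fun q hq =>
    iSup_mono fun y => easy q hq y
  have hkey : ∃ q₀ ∈ stdSimplex ℝ (Fin ℓ),
      (⨆ y : s, ((∑ i, q₀ i * g i (y : E) : ℝ) : EReal)) ≤ v := by
    by_cases htop : v = ⊤
    · refine ⟨fun _ => (ℓ : ℝ)⁻¹, ⟨fun i => by positivity, ?_⟩, by simp [htop]⟩
      rw [Finset.sum_const, card_univ, Fintype.card_fin, nsmul_eq_mul]
      exact mul_inv_cancel₀ (by exact_mod_cast hℓ.ne')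
    · have hbot : v ≠ ⊥ := by
        obtain ⟨y₀, hy₀⟩ := hsne
        obtain ⟨i₀, _, hi₀⟩ := Finset.exists_min_image univ (fun i => g i y₀) univ_nonempty
        have hle : ((g i₀ y₀ : ℝ) : EReal) ≤ v := by
          refine le_trans (le_iInf fun i => EReal.coe_le_coe_iff.2 (hi₀ i (mem_univ i)))
            (le_iSup (fun y : s => ⨅ i : Fin ℓ, ((g i (y : E) : ℝ) : EReal)) ⟨y₀, hy₀⟩)
        intro h
        rw [h, le_bot_iff] at hle
        exact EReal.coe_ne_bot _ hle
      set c : ℝ := v.toReal with hcdef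
      have hc' : (c : EReal) = v := EReal.coe_toReal htop hbot
      have hc : ∀ y ∈ s, ∃ i, g i y ≤ c := by
        intro y hy
        obtain ⟨i₀, _, hi₀⟩ := Finset.exists_min_image univ (fun i => g i y) univ_nonempty
        refine ⟨i₀, ?_⟩
        have h1 : ((g i₀ y : ℝ) : EReal) ≤ v :=
          le_trans (le_iInf fun i => EReal.coe_le_coe_iff.2 (hi₀ i (mem_univ i)))
            (le_iSup (fun y : s => ⨅ i : Fin ℓ, ((g i (y : E) : ℝ) : EReal)) ⟨y, hy⟩)
        rw [← hc'] at h1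
        exact EReal.coe_le_coe_iff.1 h1
      obtain ⟨q₀, hq₀mem, hq₀⟩ := attain_lemma ℓ s g c
        (fun ε hε => sep_lemma ℓ hℓ s hs hsne g hg c hc ε hε)
      refine ⟨q₀, hq₀mem, ?_⟩
      rw [← hc']
      exact iSup_le fun y => EReal.coe_le_coe_iff.2 (hq₀ y y.2)
  obtain ⟨q₀, hq₀mem, hq₀le⟩ := hkey
  constructor
  · refine le_antisymm ?_ (le_iInf fun q => easy2 q q.2)
    exact iInf_le_of_le (⟨q₀, hq₀mem⟩ : stdSimplex ℝ (Fin ℓ)) hq₀le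
  · exact ⟨q₀, hq₀mem, le_antisymm hq₀le (easy2 q₀ hq₀mem)⟩
end

section
/- Let Y be a compact convex subset of a topological vector space and g₁,…,g_ℓ : Y → ℝ strictly concave upper semi-continuous functions. Set L = min_{q ∈ Δ_ℓ} sup_{y∈Y} Σᵢ qᵢ gᵢ(y). Then there is a unique y ∈ Y with min{g₁(y),…,g_ℓ(y)} = L; moreover, if the minimum of P(q) = sup_{y∈Y} Σᵢ qᵢ gᵢ(y) over Δ_ℓ is attained at q* = (q₁*,…,q_ℓ*), then the unique maximizer y_{q*} of Σᵢ qᵢ* gᵢ equals y, and qⱼ* = 0 whenever gⱼ(y) > L. -/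
open Filter Set Topology

/-- An upper semicontinuous function on a nonempty compact set attains its maximum. -/
lemma usc_exists_max {E : Type*} [TopologicalSpace E] {s : Set E} (hsc : IsCompact s)
    (hne : s.Nonempty) {f : E → ℝ} (hf : UpperSemicontinuousOn f s) :
    ∃ y ∈ s, ∀ z ∈ s, f z ≤ f y := by
  by_contra h
  push_neg at h
  choose w hws hfw using h
  have hU : ∀ x (hx : x ∈ s), ∃ U ∈ 𝓝 x, ∀ z ∈ U ∩ s, f z < f (w x hx) := by
    intro x hx
    have h1 := hf x hx (f (w x hx)) (hfw x hx)
    rw [eventually_nhdsWithin_iff] at h1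
    obtain ⟨U, hU, hUsub⟩ := eventually_nhds_iff.1 h1
    exact ⟨U, hUsub.1.mem_nhds hUsub.2, fun z hz => hU z hz.1 hz.2⟩
  choose U hUmem hUlt using hU
  obtain ⟨t, hts⟩ := hsc.elim_nhds_subcover' U hUmem
  have htne : t.Nonempty := by
    obtain ⟨y₀, hy₀⟩ := hne
    have := hts hy₀
    simp only [Set.mem_iUnion] at this
    obtain ⟨x, hx, _⟩ := this
    exact ⟨x, hx⟩
  obtain ⟨x₀, hx₀t, hx₀max⟩ := t.exists_max_image (fun x => f (w x.1 x.2)) htne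
  have hwx₀ : w x₀.1 x₀.2 ∈ s := hws _ _
  have := hts hwx₀
  simp only [Set.mem_iUnion] at this
  obtain ⟨x₁, hx₁t, hx₁U⟩ := this
  exact absurd (hx₀max x₁ hx₁t) (not_le.2 (hUlt x₁.1 x₁.2 _ ⟨hx₁U, hwx₀⟩))

lemma usc_const_mul {E : Type*} [TopologicalSpace E] {s : Set E} {c : ℝ} (hc : 0 ≤ c)
    {f : E → ℝ} (hf : UpperSemicontinuousOn f s) :
    UpperSemicontinuousOn (fun y => c * f y) s := by
  rcases hc.eq_or_lt with rfl | hc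
  · intro x hx y hy
    simp only [zero_mul] at hy ⊢
    exact Filter.Eventually.of_forall fun z => hy
  · intro x hx y hy
    simp only at hy
    have hx' : f x < y / c := (lt_div_iff₀' hc).2 hy
    filter_upwards [hf x hx _ hx'] with z hz
    calc c * f z < c * (y / c) := by exact (mul_lt_mul_iff_right₀ hc).2 hz
    _ = y := by field_simp

lemma usc_restrict {E : Type*} [TopologicalSpace E] {s : Set E} {f : E → ℝ}
    (hf : UpperSemicontinuousOn f s) : UpperSemicontinuous (s.restrict f) := by
  intro x c hc
  have h := hf x.1 x.2 c hc
  rw [← map_nhds_subtype_val] at h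
  exact eventually_map.1 h

lemma concaveOn_finset_sum {E : Type*} [AddCommGroup E] [Module ℝ E] {s : Set E}
    (hs : Convex ℝ s) {ι : Type*} (t : Finset ι) {f : ι → E → ℝ}
    (h : ∀ i ∈ t, ConcaveOn ℝ s (f i)) :
    ConcaveOn ℝ s (fun y => ∑ i ∈ t, f i y) := by
  induction t using Finset.cons_induction with
  | empty => simpa using concaveOn_const (0:ℝ) hs
  | cons i t hi ih =>
    simp only [Finset.sum_cons]
    exact (h i (Finset.mem_cons_self i t)).add
      (ih fun j hj => h j (Finset.mem_cons_of_mem hj))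

lemma strictConcaveOn_const_mul {E : Type*} [AddCommGroup E] [Module ℝ E] {s : Set E}
    {c : ℝ} (hc : 0 < c) {f : E → ℝ} (hf : StrictConcaveOn ℝ s f) :
    StrictConcaveOn ℝ s (fun y => c * f y) := by
  refine ⟨hf.1, fun x hx y hy hxy a b ha hb hab => ?_⟩
  have h2 := hf.2 hx hy hxy ha hb hab
  simp only [smul_eq_mul] at h2 ⊢
  nlinarith

lemma concaveOn_const_mul {E : Type*} [AddCommGroup E] [Module ℝ E] {s : Set E}
    {c : ℝ} (hc : 0 ≤ c) {f : E → ℝ} (hf : ConcaveOn ℝ s f) :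
    ConcaveOn ℝ s (fun y => c * f y) := by
  have := hf.smul hc
  simpa [Pi.smul_apply, smul_eq_mul] using this

lemma strictConcaveOn_max_unique {E : Type*} [AddCommGroup E] [Module ℝ E] {s : Set E}
    {f : E → ℝ} (hf : StrictConcaveOn ℝ s f) {y₁ y₂ : E} (h1 : y₁ ∈ s) (h2 : y₂ ∈ s)
    (hm1 : ∀ z ∈ s, f z ≤ f y₁) (hm2 : ∀ z ∈ s, f z ≤ f y₂) : y₁ = y₂ := by
  by_contra hne
  have hmem : (1/2 : ℝ) • y₁ + (1/2 : ℝ) • y₂ ∈ s :=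
    hf.1 h1 h2 (by norm_num) (by norm_num) (by norm_num)
  have hlt := hf.2 h1 h2 hne (by norm_num : (0:ℝ) < 1/2) (by norm_num : (0:ℝ) < 1/2)
    (by norm_num)
  have h12 : f y₁ = f y₂ := le_antisymm (hm2 _ h1) (hm1 _ h2)
  have := hm1 _ hmem
  simp only [smul_eq_mul] at hlt
  linarith

/-- `P q = sup_{y ∈ s} Σᵢ qᵢ gᵢ(y)`. -/
noncomputable def Pfun {E : Type*} (ℓ : ℕ) (s : Set E) (g : Fin ℓ → E → ℝ)
    (q : Fin ℓ → ℝ) : ℝ :=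
  sSup ((fun y => ∑ i, q i * g i y) '' s)

/-- With `L = min_{q ∈ Δ_ℓ} P(q)`, there is a unique `y ∈ s` with
`min_i gᵢ(y) = L`; moreover if `P` attains its minimum at `q*`, the unique such `y`
maximizes `Σ qᵢ* gᵢ` on `s`, and `qⱼ* = 0` whenever `gⱼ(y) > L`. -/
theorem stmt3 {E : Type*} [AddCommGroup E] [Module ℝ E] [TopologicalSpace E]
    (ℓ : ℕ) (hℓ : 0 < ℓ) (s : Set E) (hs : Convex ℝ s) (hsc : IsCompact s)
    (hsne : s.Nonempty) (g : Fin ℓ → E → ℝ)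
    (hg : ∀ i, StrictConcaveOn ℝ s (g i))
    (husc : ∀ i, UpperSemicontinuousOn (g i) s) :
    (∃! y : E, y ∈ s ∧ (⨅ i, g i y) = sInf (Pfun ℓ s g '' stdSimplex ℝ (Fin ℓ))) ∧
      ∀ q ∈ stdSimplex ℝ (Fin ℓ),
        Pfun ℓ s g q = sInf (Pfun ℓ s g '' stdSimplex ℝ (Fin ℓ)) →
          ∀ y : E, y ∈ s →
            (⨅ i, g i y) = sInf (Pfun ℓ s g '' stdSimplex ℝ (Fin ℓ)) →
              (∀ z ∈ s, ∑ i, q i * g i z ≤ ∑ i, q i * g i y) ∧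
                ∀ j, sInf (Pfun ℓ s g '' stdSimplex ℝ (Fin ℓ)) < g j y → q j = 0 := by
  haveI : Nonempty (Fin ℓ) := ⟨⟨0, hℓ⟩⟩
  obtain ⟨y₀, hy₀⟩ := hsne
  set Δ : Set (Fin ℓ → ℝ) := stdSimplex ℝ (Fin ℓ) with hΔdef
  set F : (Fin ℓ → ℝ) → E → ℝ := fun q y => ∑ i, q i * g i y with hFdef
  have hPdef : ∀ q, Pfun ℓ s g q = sSup (F q '' s) := fun q => rfl
  set L : ℝ := sInf (Pfun ℓ s g '' Δ) with hLdef
  -- upper bounds for the g's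
  have hmaxg := fun i => usc_exists_max hsc ⟨y₀, hy₀⟩ (husc i)
  choose w hws hCw using hmaxg
  set M : ℝ := Finset.univ.sup' Finset.univ_nonempty (fun i => g i (w i)) with hMdef
  have hgM : ∀ i, ∀ z ∈ s, g i z ≤ M := fun i z hz =>
    (hCw i z hz).trans (Finset.le_sup' (fun i => g i (w i)) (Finset.mem_univ i))
  -- properties of members of the simplex
  have hq0 : ∀ q ∈ Δ, ∀ i, 0 ≤ q i := fun q hq => hq.1
  have hq1 : ∀ q ∈ Δ, ∑ i, q i = 1 := fun q hq => hq.2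
  -- F q bounded above on s
  have hbdd : ∀ q ∈ Δ, BddAbove (F q '' s) := by
    intro q hq
    refine ⟨M, ?_⟩
    rintro _ ⟨z, hz, rfl⟩
    calc F q z ≤ ∑ i, q i * M :=
          Finset.sum_le_sum fun i _ => mul_le_mul_of_nonneg_left (hgM i z hz) (hq0 q hq i)
      _ = M := by rw [← Finset.sum_mul, hq1 q hq, one_mul]
  have hfle : ∀ q ∈ Δ, ∀ z ∈ s, F q z ≤ Pfun ℓ s g q := fun q hq z hz => by
    rw [hPdef]; exact le_csSup (hbdd q hq) ⟨z, hz, rfl⟩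
  have hPle : ∀ q ∈ Δ, ∀ c : ℝ, (∀ z ∈ s, F q z ≤ c) → Pfun ℓ s g q ≤ c := by
    intro q hq c h
    rw [hPdef]
    refine csSup_le (Set.Nonempty.image _ ⟨y₀, hy₀⟩) ?_
    rintro _ ⟨z, hz, rfl⟩
    exact h z hz
  -- lower bound of F q by the infimum of the g's
  have hglb : ∀ (y : E) (i : Fin ℓ), (⨅ i', g i' y) ≤ g i y := fun y i =>
    ciInf_le (Finite.bddBelow_range _) i
  have hiInf_le : ∀ y ∈ s, ∀ q ∈ Δ, (⨅ i, g i y) ≤ F q y := by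
    intro y hy q hq
    have h1 : (⨅ i, g i y) = ∑ i, q i * (⨅ i', g i' y) := by
      rw [← Finset.sum_mul, hq1 q hq, one_mul]
    rw [h1]
    exact Finset.sum_le_sum fun i _ => mul_le_mul_of_nonneg_left (hglb y i) (hq0 q hq i)
  -- the simplex is nonempty
  have hΔne : Δ.Nonempty := ⟨_, ite_eq_mem_stdSimplex ℝ (⟨0, hℓ⟩ : Fin ℓ)⟩
  have hPimne : (Pfun ℓ s g '' Δ).Nonempty := hΔne.image _
  have hPbb : BddBelow (Pfun ℓ s g '' Δ) := by
    refine ⟨⨅ i, g i y₀, ?_⟩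
    rintro _ ⟨q, hq, rfl⟩
    exact (hiInf_le y₀ hy₀ q hq).trans (hfle q hq y₀ hy₀)
  have hLP : ∀ q ∈ Δ, L ≤ Pfun ℓ s g q := fun q hq => csInf_le hPbb ⟨q, hq, rfl⟩
  have heasy : ∀ y ∈ s, (⨅ i, g i y) ≤ L := by
    intro y hy
    refine le_csInf hPimne ?_
    rintro _ ⟨q, hq, rfl⟩
    exact (hiInf_le y hy q hq).trans (hfle q hq y hy)
  -- upper semicontinuity of F q
  have husc_F : ∀ q ∈ Δ, UpperSemicontinuousOn (F q) s := fun q hq =>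
    upperSemicontinuousOn_sum fun i _ => usc_const_mul (hq0 q hq i) (husc i)
  -- strict concavity of F q
  have hconc : ∀ q ∈ Δ, StrictConcaveOn ℝ s (F q) := by
    intro q hq
    obtain ⟨i₀, hi₀⟩ : ∃ i, 0 < q i := by
      by_contra h
      push_neg at h
      have h0 : ∀ i, q i = 0 := fun i => le_antisymm (h i) (hq0 q hq i)
      have := hq1 q hq
      simp [h0] at this
    have hFsplit : F q = fun y => q i₀ * g i₀ y + ∑ i ∈ Finset.univ.erase i₀, q i * g i y := by
      funext y
      rw [hFdef]
      exact (Finset.add_sum_erase _ _ (Finset.mem_univ i₀)).symm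
    rw [hFsplit]
    have h1 : StrictConcaveOn ℝ s (fun y => q i₀ * g i₀ y) :=
      strictConcaveOn_const_mul hi₀ (hg i₀)
    have h2 : ConcaveOn ℝ s (fun y => ∑ i ∈ Finset.univ.erase i₀, q i * g i y) :=
      concaveOn_finset_sum hs _ fun i _ => concaveOn_const_mul (hq0 q hq i) (hg i).concaveOn
    exact h1.add_concaveOn h2
  -- P attains its minimum on the simplex
  have hQusc : UpperSemicontinuousOn (fun q => -Pfun ℓ s g q) Δ := by
    intro q₀ hq₀ c hc
    simp only at hc
    have h1 : -c < Pfun ℓ s g q₀ := by linarith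
    rw [hPdef] at h1
    obtain ⟨a, ⟨z, hz, rfl⟩, hza⟩ := exists_lt_of_lt_csSup (Set.Nonempty.image _ ⟨y₀, hy₀⟩) h1
    have hcont : Continuous (fun q : Fin ℓ → ℝ => F q z) := by
      apply continuous_finset_sum
      exact fun i _ => (continuous_apply i).mul continuous_const
    have hopen : IsOpen {q : Fin ℓ → ℝ | -c < F q z} := isOpen_lt continuous_const hcont
    have hev : ∀ᶠ q in 𝓝[Δ] q₀, -c < F q z :=
      eventually_nhdsWithin_of_eventually_nhds (hopen.mem_nhds hza)
    filter_upwards [hev, self_mem_nhdsWithin] with q hq1' hq2'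
    have h2 : F q z ≤ Pfun ℓ s g q := hfle q hq2' z hz
    show -Pfun ℓ s g q < c
    linarith
  obtain ⟨q', hq'Δ, hq'max⟩ := usc_exists_max (isCompact_stdSimplex ℝ (Fin ℓ)) hΔne hQusc
  have hq'min : ∀ q ∈ Δ, Pfun ℓ s g q' ≤ Pfun ℓ s g q := by
    intro q hq
    exact neg_le_neg_iff.1 (hq'max q hq)
  have hLq' : Pfun ℓ s g q' = L := by
    refine le_antisymm ?_ (hLP q' hq'Δ)
    refine le_csInf hPimne ?_
    rintro _ ⟨q, hq, rfl⟩
    exact hq'min q hq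
  -- the maximizer of F q'
  obtain ⟨ys, hyss, hysmax⟩ := usc_exists_max hsc ⟨y₀, hy₀⟩ (husc_F q' hq'Δ)
  have hPq'y : Pfun ℓ s g q' = F q' ys :=
    le_antisymm (hPle q' hq'Δ _ hysmax) (hfle q' hq'Δ ys hyss)
  -- the key step: every gⱼ(ys) is at least L
  haveI : CompactSpace s := isCompact_iff_compactSpace.1 hsc
  have hkey : ∀ j, L ≤ g j ys := by
    intro j
    set K : ℕ → Set s := fun n =>
      s.restrict (F q') ⁻¹' Ici (L - 1/((n:ℝ)+1)) ∩ s.restrict (g j) ⁻¹' Ici L with hKdef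
    have hKcl : ∀ n, IsClosed (K n) :=
      fun n => ((usc_restrict (husc_F q' hq'Δ)).isClosed_preimage _).inter
        ((usc_restrict (husc j)).isClosed_preimage _)
    have hKcp : ∀ n, IsCompact (K n) := fun n => (hKcl n).isCompact
    have hanti : ∀ m n : ℕ, m ≤ n → K n ⊆ K m := by
      intro m n hmn x hx
      refine ⟨?_, hx.2⟩
      have h1 : (1:ℝ)/((n:ℝ)+1) ≤ 1/((m:ℝ)+1) := by
        apply one_div_le_one_div_of_le
        · positivity
        · have : (m:ℝ) ≤ n := Nat.cast_le.2 hmn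
          linarith
      have h2 := hx.1
      simp only [Set.mem_preimage, Set.mem_Ici, Set.restrict_apply] at h2 ⊢
      linarith
    have hdir : Directed (· ⊇ ·) K := fun m n =>
      ⟨max m n, hanti _ _ (le_max_left m n), hanti _ _ (le_max_right m n)⟩
    have hKne : ∀ n, (K n).Nonempty := by
      intro n
      set ε : ℝ := 1/((n:ℝ)+1) with hεdef
      have hε0 : 0 < ε := by positivity
      set D : ℝ := |M - L| + 1 with hDdef
      have hD : 0 < D := by positivity
      set t : ℝ := min (1/2) (ε/(2*D)) with htdef
      have ht0 : 0 < t := lt_min (by norm_num) (by positivity)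
      have ht2 : t ≤ 1/2 := min_le_left _ _
      have htε : t ≤ ε/(2*D) := min_le_right _ _
      set q : Fin ℓ → ℝ := fun i => (1-t) * q' i + t * (if j = i then 1 else 0) with hqdef
      have hqΔ : q ∈ Δ := by
        have hc := (convex_stdSimplex ℝ (Fin ℓ)) hq'Δ (ite_eq_mem_stdSimplex ℝ j)
          (by linarith : (0:ℝ) ≤ 1-t) ht0.le (by ring)
        convert hc using 1
        rfl
      obtain ⟨yt, hyts, hytmax⟩ := usc_exists_max hsc ⟨y₀, hy₀⟩ (husc_F q hqΔ)
      have hsplit : ∀ z : E, F q z = (1-t) * F q' z + t * g j z := by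
        intro z
        show ∑ i, ((1-t) * q' i + t * (if j = i then 1 else 0)) * g i z
          = (1-t) * F q' z + t * g j z
        have e1 : ∀ i ∈ Finset.univ, ((1-t) * q' i + t * (if j = i then 1 else 0)) * g i z
            = (1-t) * (q' i * g i z) + t * (if j = i then g i z else 0) := by
          intro i _
          by_cases h : j = i <;> simp [h] <;> try ring
        rw [Finset.sum_congr rfl e1, Finset.sum_add_distrib, ← Finset.mul_sum,
          ← Finset.mul_sum, Finset.sum_ite_eq]
        simp [hFdef]
      have h1 : L ≤ (1-t) * F q' yt + t * g j yt := by
        have ha : L ≤ Pfun ℓ s g q := hLP q hqΔ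
        have hb : Pfun ℓ s g q ≤ F q yt := hPle q hqΔ _ fun z hz => hytmax z hz
        rw [hsplit yt] at hb
        linarith
      have h2 : F q' yt ≤ L := by
        have := hfle q' hq'Δ yt hyts
        rwa [hLq'] at this
      have h3 : g j yt ≤ M := hgM j yt hyts
      have hgL : L ≤ g j yt := by nlinarith
      have hFL : L - ε ≤ F q' yt := by
        have h4 : L - t*M ≤ (1-t) * F q' yt := by nlinarith
        have hML : M - L ≤ D := by
          have := le_abs_self (M - L)
          simp only [hDdef]
          linarith
        have htD : t * D ≤ ε/2 := by
          calc t * D ≤ (ε/(2*D)) * D := mul_le_mul_of_nonneg_right htε hD.le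
            _ = ε/2 := by field_simp
        have h5 : (1-t)*(L-ε) ≤ L - t*M := by nlinarith [mul_le_mul_of_nonneg_left hML ht0.le]
        have h6 : (0:ℝ) < 1 - t := by linarith
        nlinarith
      exact ⟨⟨yt, hyts⟩, hFL, hgL⟩
    obtain ⟨x, hx⟩ :=
      IsCompact.nonempty_iInter_of_directed_nonempty_isCompact_isClosed K hdir hKne hKcp hKcl
    have hxmem : ∀ n : ℕ, x ∈ K n := fun n => Set.mem_iInter.1 hx n
    have hxF : L ≤ F q' (x : E) := by
      by_contra h
      push_neg at h
      obtain ⟨n, hn⟩ := exists_nat_one_div_lt (by linarith : (0:ℝ) < L - F q' (x : E))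
      have := (hxmem n).1
      simp only [Set.mem_preimage, Set.mem_Ici, Set.restrict_apply] at this
      change L - 1/((n:ℝ)+1) ≤ F q' (x : E) at this
      linarith
    have hxg : L ≤ g j (x : E) := by
      have := (hxmem 0).2
      exact this
    have hxmax : ∀ z ∈ s, F q' z ≤ F q' (x : E) := fun z hz =>
      (hfle q' hq'Δ z hz).trans (by rw [hLq']; exact hxF)
    have hxys : (x : E) = ys :=
      strictConcaveOn_max_unique (hconc q' hq'Δ) x.2 hyss hxmax hysmax
    rwa [hxys] at hxg
  have hysL : (⨅ i, g i ys) = L := le_antisymm (heasy ys hyss) (le_ciInf hkey)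
  -- uniqueness
  have huniq : ∀ y1 ∈ s, ∀ y2 ∈ s,
      (⨅ i, g i y1) = L → (⨅ i, g i y2) = L → y1 = y2 := by
    intro y1 h1 y2 h2 hL1 hL2
    by_contra hne
    set m : E := (1/2:ℝ) • y1 + (1/2:ℝ) • y2 with hmdef
    have hms : m ∈ s := hs h1 h2 (by norm_num) (by norm_num) (by norm_num)
    have hstrict : ∀ i, L < g i m := by
      intro i
      have hcc := (hg i).2 h1 h2 hne (by norm_num : (0:ℝ) < 1/2)
        (by norm_num : (0:ℝ) < 1/2) (by norm_num)
      have e1 : L ≤ g i y1 := hL1 ▸ hglb y1 i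
      have e2 : L ≤ g i y2 := hL2 ▸ hglb y2 i
      simp only [smul_eq_mul] at hcc
      linarith
    obtain ⟨i₀, _, hi₀⟩ := Finset.exists_min_image Finset.univ (fun i => g i m)
      Finset.univ_nonempty
    have hmin : g i₀ m ≤ ⨅ i, g i m := le_ciInf fun i => hi₀ i (Finset.mem_univ i)
    have := heasy m hms
    have := hstrict i₀
    linarith
  refine ⟨⟨ys, ⟨hyss, hysL⟩, fun y' hy' => huniq y' hy'.1 ys hyss hy'.2 hysL⟩, ?_⟩
  -- second part
  intro q hqΔ hqP y hys hyL
  have hgiy : ∀ i, L ≤ g i y := fun i => hyL ▸ hglb y i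
  have hFqy : L ≤ F q y := by
    have h1 : L = ∑ i, q i * L := by rw [← Finset.sum_mul, hq1 q hqΔ, one_mul]
    rw [h1]
    exact Finset.sum_le_sum fun i _ => mul_le_mul_of_nonneg_left (hgiy i) (hq0 q hqΔ i)
  constructor
  · intro z hz
    have h1 : F q z ≤ Pfun ℓ s g q := hfle q hqΔ z hz
    rw [hqP] at h1
    exact h1.trans hFqy
  · intro j hj
    have h1 : F q y ≤ L := by
      have := hfle q hqΔ y hys
      rwa [hqP] at this
    have hsum : ∑ i, q i * (g i y - L) ≤ 0 := by
      have e1 : ∑ i, q i * (g i y - L) = F q y - ∑ i, q i * L := by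
        rw [hFdef]
        simp only [mul_sub]
        rw [Finset.sum_sub_distrib]
      have e2 : ∑ i, q i * L = L := by rw [← Finset.sum_mul, hq1 q hqΔ, one_mul]
      rw [e1, e2]
      linarith
    have hnn : ∀ i ∈ Finset.univ, (0:ℝ) ≤ q i * (g i y - L) := fun i _ =>
      mul_nonneg (hq0 q hqΔ i) (by linarith [hgiy i])
    have hz0 := (Finset.sum_eq_zero_iff_of_nonneg hnn).1
      (le_antisymm hsum (Finset.sum_nonneg hnn)) j (Finset.mem_univ j)
    rcases mul_eq_zero.1 hz0 with h | h
    · exact h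
    · exfalso; linarith
end

section
/- Let (Lⱼ)_{j≥1} be independent real-valued random variables with E(Lⱼ) = 0, let I ⊂ ℕ be finite, and let q ∈ (1,2]. Then E(|Σ_{i∈I} Lᵢ|^q) ≤ 2 Σ_{i∈I} E(|Lᵢ|^q). -/
open MeasureTheory

open MeasureTheory Real Set

namespace VBE

lemma subadd {p : ℝ} (hp0 : 0 ≤ p) (hp1 : p ≤ 1) {a b : ℝ} (ha : 0 ≤ a) (hb : 0 ≤ b) :
    (a + b) ^ p ≤ a ^ p + b ^ p := by
  have h := NNReal.rpow_add_le_add_rpow a.toNNReal b.toNNReal hp0 hp1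
  have h2 := (NNReal.coe_le_coe).2 h
  push_cast at h2
  simpa [Real.coe_toNNReal _ ha, Real.coe_toNNReal _ hb] using h2

variable {q : ℝ} (hq1 : 1 ≤ q) (hq2 : q ≤ 2)

lemma cont_rpow (hq : 0 < q) : Continuous fun t : ℝ => t ^ q :=
  continuous_iff_continuousAt.2 fun x => Real.continuousAt_rpow_const x q (Or.inr hq.le)

include hq1 hq2 in
lemma L1 {t : ℝ} (ht : 0 ≤ t) : (1 + t) ^ q ≤ 1 + q * t + t ^ q := by
  have hq0 : 0 < q := lt_of_lt_of_le one_pos hq1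
  set f : ℝ → ℝ := fun t => 1 + q * t + t ^ q - (1 + t) ^ q with hf
  have hcont : Continuous f := by
    apply (((continuous_const.add (continuous_const.mul continuous_id)).add
      (cont_rpow hq0)).sub ((cont_rpow hq0).comp (continuous_const.add continuous_id)))
  have hder : ∀ x : ℝ, 0 < x →
      HasDerivAt f (q + q * x ^ (q - 1) - q * (1 + x) ^ (q - 1)) x := by
    intro x hx
    have h1 : HasDerivAt (fun t : ℝ => t ^ q) (q * x ^ (q - 1)) x :=
      Real.hasDerivAt_rpow_const (Or.inl hx.ne')
    have h2 : HasDerivAt (fun t : ℝ => (1 + t) ^ q) (q * (1 + x) ^ (q - 1)) x := by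
      have hb : (0:ℝ) < 1 + x := by linarith
      have := (Real.hasDerivAt_rpow_const (x := 1 + x) (p := q) (Or.inl hb.ne')).comp x
        ((hasDerivAt_const x (1:ℝ)).add (hasDerivAt_id x))
      simpa [Function.comp_def, Pi.add_def, Pi.sub_def] using this
    have h3 : HasDerivAt (fun t : ℝ => 1 + q * t + t ^ q) (q + q * x ^ (q - 1)) x := by
      have := ((hasDerivAt_const x (1:ℝ)).add ((hasDerivAt_id x).const_mul q)).add h1
      simpa [Function.comp_def, Pi.add_def, Pi.sub_def] using this
    simpa [Function.comp_def, Pi.add_def, Pi.sub_def] using h3.sub h2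
  have hmono : MonotoneOn f (Ici 0) := by
    apply monotoneOn_of_deriv_nonneg (convex_Ici 0) hcont.continuousOn
    · intro x hx
      rw [interior_Ici] at hx
      exact ((hder x hx).differentiableAt).differentiableWithinAt
    · intro x hx
      rw [interior_Ici] at hx
      rw [(hder x hx).deriv]
      have hx0 : (0:ℝ) < x := Set.mem_Ioi.mp hx
      have hsub : (1 + x) ^ (q - 1) ≤ 1 + x ^ (q - 1) := by
        have h := subadd (p := q - 1) (a := 1) (b := x) (by linarith) (by linarith)
          zero_le_one hx0.le
        simpa [Real.one_rpow] using h
      nlinarith [Real.rpow_nonneg hx0.le (q-1), hq0]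
  have h0 : f 0 ≤ f t := hmono (self_mem_Ici) ht ht
  have hf0 : f 0 = 0 := by simp [hf, Real.zero_rpow (by positivity : q ≠ 0)]
  rw [hf0] at h0
  simp only [hf] at h0
  linarith

include hq1 hq2 in
lemma L2 {s : ℝ} (hs0 : 0 ≤ s) (hs1 : s ≤ 1) : (1 - s) ^ q ≤ 1 - q * s + 2 * s ^ q := by
  have hq0 : 0 < q := lt_of_lt_of_le one_pos hq1
  set f : ℝ → ℝ := fun s => 1 - q * s + 2 * s ^ q - (1 - s) ^ q with hf
  have hcont : Continuous f :=
    ((continuous_const.sub (continuous_const.mul continuous_id)).add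
      (continuous_const.mul (cont_rpow hq0))).sub
      ((cont_rpow hq0).comp (continuous_const.sub continuous_id))
  have hder : ∀ x : ℝ, x ∈ Ioo (0:ℝ) 1 →
      HasDerivAt f (-q + 2 * (q * x ^ (q - 1)) + q * (1 - x) ^ (q - 1)) x := by
    intro x hx
    have h1 : HasDerivAt (fun t : ℝ => t ^ q) (q * x ^ (q - 1)) x :=
      Real.hasDerivAt_rpow_const (Or.inl hx.1.ne')
    have h2 : HasDerivAt (fun t : ℝ => (1 - t) ^ q) (-(q * (1 - x) ^ (q - 1))) x := by
      have hb : (0:ℝ) < 1 - x := by linarith [hx.2]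
      have := (Real.hasDerivAt_rpow_const (x := 1 - x) (p := q) (Or.inl hb.ne')).comp x
        ((hasDerivAt_const x (1:ℝ)).sub (hasDerivAt_id x))
      simpa [Function.comp_def, Pi.add_def, Pi.sub_def] using this
    have h3 : HasDerivAt (fun t : ℝ => 1 - q * t + 2 * t ^ q)
        (-q + 2 * (q * x ^ (q - 1))) x := by
      have := ((hasDerivAt_const x (1:ℝ)).sub ((hasDerivAt_id x).const_mul q)).add
        (h1.const_mul 2)
      simpa [Function.comp_def, Pi.add_def, Pi.sub_def] using this
    have := h3.sub h2
    simpa [sub_neg_eq_add, Function.comp_def, Pi.add_def, Pi.sub_def] using this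
  have hmono : MonotoneOn f (Icc 0 1) := by
    apply monotoneOn_of_deriv_nonneg (convex_Icc 0 1) hcont.continuousOn
    · intro x hx
      rw [interior_Icc] at hx
      exact ((hder x hx).differentiableAt).differentiableWithinAt
    · intro x hx
      rw [interior_Icc] at hx
      rw [(hder x hx).deriv]
      have hx0 := hx.1
      have hx1 := hx.2
      have hb : (0:ℝ) < 1 - x := by linarith
      have e1 : x ≤ x ^ (q - 1) := by
        have := Real.rpow_le_rpow_of_exponent_ge hx0 hx1.le (by linarith : q - 1 ≤ 1)
        simpa using this
      have e2 : 1 - x ≤ (1 - x) ^ (q - 1) := by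
        have := Real.rpow_le_rpow_of_exponent_ge hb (by linarith) (by linarith : q - 1 ≤ 1)
        simpa using this
      nlinarith
  have h0 : f 0 ≤ f s := hmono ⟨le_refl 0, zero_le_one⟩ ⟨hs0, hs1⟩ hs0
  have hf0 : f 0 = 0 := by simp [hf, Real.zero_rpow (by positivity : q ≠ 0)]
  rw [hf0] at h0
  simp only [hf] at h0
  linarith

include hq1 hq2 in
lemma L3 {u : ℝ} (hu : 1 ≤ u) : (u - 1) ^ q ≤ 1 - q * u + 2 * u ^ q := by
  have hq0 : 0 < q := lt_of_lt_of_le one_pos hq1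
  set f : ℝ → ℝ := fun u => 1 - q * u + 2 * u ^ q - (u - 1) ^ q with hf
  have hcont : Continuous f :=
    ((continuous_const.sub (continuous_const.mul continuous_id)).add
      (continuous_const.mul (cont_rpow hq0))).sub
      ((cont_rpow hq0).comp (continuous_id.sub continuous_const))
  have hder : ∀ x : ℝ, x ∈ Ioi (1:ℝ) →
      HasDerivAt f (-q + 2 * (q * x ^ (q - 1)) - q * (x - 1) ^ (q - 1)) x := by
    intro x hx
    have hx1 : (1:ℝ) < x := hx
    have h1 : HasDerivAt (fun t : ℝ => t ^ q) (q * x ^ (q - 1)) x :=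
      Real.hasDerivAt_rpow_const (Or.inl (by positivity : x ≠ 0))
    have h2 : HasDerivAt (fun t : ℝ => (t - 1) ^ q) (q * (x - 1) ^ (q - 1)) x := by
      have hb : (0:ℝ) < x - 1 := by linarith
      have := (Real.hasDerivAt_rpow_const (x := x - 1) (p := q) (Or.inl hb.ne')).comp x
        ((hasDerivAt_id x).sub (hasDerivAt_const x (1:ℝ)))
      simpa [Function.comp_def, Pi.add_def, Pi.sub_def] using this
    have h3 : HasDerivAt (fun t : ℝ => 1 - q * t + 2 * t ^ q)
        (-q + 2 * (q * x ^ (q - 1))) x := by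
      have := ((hasDerivAt_const x (1:ℝ)).sub ((hasDerivAt_id x).const_mul q)).add
        (h1.const_mul 2)
      simpa [Function.comp_def, Pi.add_def, Pi.sub_def] using this
    exact h3.sub h2
  have hmono : MonotoneOn f (Ici 1) := by
    apply monotoneOn_of_deriv_nonneg (convex_Ici 1) hcont.continuousOn
    · intro x hx
      rw [interior_Ici] at hx
      exact ((hder x hx).differentiableAt).differentiableWithinAt
    · intro x hx
      rw [interior_Ici] at hx
      rw [(hder x hx).deriv]
      have hx1 : (1:ℝ) < x := hx
      have e1 : (1:ℝ) ≤ x ^ (q - 1) := Real.one_le_rpow hx1.le (by linarith)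
      have e2 : (x - 1) ^ (q - 1) ≤ x ^ (q - 1) :=
        Real.rpow_le_rpow (by linarith) (by linarith) (by linarith)
      nlinarith
  have h0 : f 1 ≤ f u := hmono (self_mem_Ici) hu hu
  have hf1 : f 1 = 3 - q := by
    simp [hf, Real.zero_rpow (by positivity : q ≠ 0), Real.one_rpow]
    ring
  rw [hf1] at h0
  simp only [hf] at h0
  linarith

include hq1 hq2 in
lemma onevar (t : ℝ) : |1 + t| ^ q ≤ 1 + q * t + 2 * |t| ^ q := by
  have hq0 : 0 < q := lt_of_lt_of_le one_pos hq1
  rcases le_or_gt 0 t with ht | ht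
  · rw [abs_of_nonneg (by linarith), abs_of_nonneg ht]
    have := L1 hq1 hq2 ht
    nlinarith [Real.rpow_nonneg ht q]
  · rcases le_or_gt (-1) t with h1 | h1
    · rw [abs_of_nonneg (by linarith), abs_of_neg ht]
      have := L2 hq1 hq2 (s := -t) (by linarith) (by linarith)
      have e : 1 - -t = 1 + t := by ring
      rw [e] at this
      linarith
    · rw [abs_of_nonpos (by linarith), abs_of_neg ht]
      have := L3 hq1 hq2 (u := -t) (by linarith)
      have e : -t - 1 = -(1 + t) := by ring
      rw [e] at this
      linarith

include hq1 hq2 in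
lemma key_pos {x : ℝ} (hx : 0 < x) (y : ℝ) :
    |x + y| ^ q ≤ x ^ q + q * (x ^ (q - 1) * y) + 2 * |y| ^ q := by
  have hq0 : 0 < q := lt_of_lt_of_le one_pos hq1
  have habs : |x + y| = x * |1 + y / x| := by
    have e : x + y = x * (1 + y / x) := by
      field_simp
    rw [e, abs_mul, abs_of_pos hx]
  have h1 : |x + y| ^ q = x ^ q * |1 + y / x| ^ q := by
    rw [habs, Real.mul_rpow hx.le (abs_nonneg _)]
  have h2 := onevar hq1 hq2 (y / x)
  have h3 : x ^ q * |1 + y / x| ^ q ≤ x ^ q * (1 + q * (y / x) + 2 * |y / x| ^ q) :=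
    mul_le_mul_of_nonneg_left h2 (Real.rpow_nonneg hx.le q)
  have e1 : x ^ q * (q * (y / x)) = q * (x ^ (q - 1) * y) := by
    rw [Real.rpow_sub hx]
    field_simp
    ring_nf
    simp
  have e2 : x ^ q * |y / x| ^ q = |y| ^ q := by
    rw [← Real.mul_rpow hx.le (abs_nonneg _), abs_div, abs_of_pos hx,
      mul_div_cancel₀ _ hx.ne']
  calc |x + y| ^ q = x ^ q * |1 + y / x| ^ q := h1
    _ ≤ x ^ q * (1 + q * (y / x) + 2 * |y / x| ^ q) := h3
    _ = x ^ q * 1 + x ^ q * (q * (y / x)) + 2 * (x ^ q * |y / x| ^ q) := by ring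
    _ = x ^ q + q * (x ^ (q - 1) * y) + 2 * |y| ^ q := by
        rw [e1, e2, mul_one]

include hq1 hq2 in
lemma key_ineq (x y : ℝ) :
    |x + y| ^ q ≤ |x| ^ q + q * (|x| ^ q / x * y) + 2 * |y| ^ q := by
  have hq0 : 0 < q := lt_of_lt_of_le one_pos hq1
  rcases lt_trichotomy x 0 with hx | hx | hx
  · have h := key_pos hq1 hq2 (x := -x) (neg_pos.2 hx) (-y)
    have e0 : |-x + -y| = |x + y| := by rw [← abs_neg]; ring_nf
    have e1 : (-x) ^ q = |x| ^ q := by rw [abs_of_neg hx]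
    have e2 : (-x) ^ (q - 1) * (-y) = |x| ^ q / x * y := by
      rw [Real.rpow_sub (neg_pos.2 hx), abs_of_neg hx]
      rw [Real.rpow_one]
      field_simp
    have e3 : |-y| = |y| := abs_neg y
    rw [e0, e1, e2, e3] at h
    exact h
  · subst hx
    simp [Real.zero_rpow hq0.ne', abs_zero]
    nlinarith [Real.rpow_nonneg (abs_nonneg y) q]
  · have h := key_pos hq1 hq2 hx y
    have e1 : |x| = x := abs_of_pos hx
    have e2 : x ^ (q - 1) * y = x ^ q / x * y := by
      rw [Real.rpow_sub hx, Real.rpow_one]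
    rw [e1, ← e2]
    exact h

include hq1 in
lemma pow_qsub1_le (a : ℝ) (ha : 0 ≤ a) : a ^ (q - 1) ≤ 1 + a ^ q := by
  rcases le_or_gt a 1 with h | h
  · have : a ^ (q - 1) ≤ 1 := Real.rpow_le_one ha h (by linarith)
    nlinarith [Real.rpow_nonneg ha q]
  · have : a ^ (q - 1) ≤ a ^ q :=
      Real.rpow_le_rpow_of_exponent_le h.le (by linarith)
    linarith

end VBE

open VBE ProbabilityTheory

/-- The von Bahr–Esseen inequality for sums of independent centered random
variables, with exponent `q ∈ (1,2]`. -/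
theorem stmt7 {Ω : Type*} [MeasurableSpace Ω] (μ : Measure Ω)
    [IsProbabilityMeasure μ] (L : ℕ → Ω → ℝ)
    (hmeas : ∀ j, Measurable (L j))
    (hind : ProbabilityTheory.iIndepFun L μ)
    (hcent : ∀ j, ∫ ω, L j ω ∂μ = 0)
    (q : ℝ) (hq1 : 1 < q) (hq2 : q ≤ 2)
    (hLq : ∀ j, MemLp (L j) (ENNReal.ofReal q) μ)
    (I : Finset ℕ) :
    ∫ ω, |∑ i ∈ I, L i ω| ^ q ∂μ ≤ 2 * ∑ i ∈ I, ∫ ω, |L i ω| ^ q ∂μ := by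
  have hq0 : 0 < q := lt_trans one_pos hq1
  set p : ENNReal := ENNReal.ofReal q with hp
  have hp0 : p ≠ 0 := by
    simp only [hp, ne_eq, ENNReal.ofReal_eq_zero, not_le]
    exact hq0
  have hptop : p ≠ ⊤ := ENNReal.ofReal_ne_top
  have hpt : p.toReal = q := ENNReal.toReal_ofReal hq0.le
  have hp1 : 1 ≤ p := by
    rw [hp, ← ENNReal.ofReal_one]
    exact ENNReal.ofReal_le_ofReal hq1.le
  have hint_abs : ∀ f : Ω → ℝ, MemLp f p μ → Integrable (fun ω => |f ω| ^ q) μ := by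
    intro f hf
    have := hf.integrable_norm_rpow hp0 hptop
    simpa [hpt, Real.norm_eq_abs] using this
  classical
  induction I using Finset.cons_induction with
  | empty => simp [Real.zero_rpow hq0.ne']
  | cons j s hj ih =>
    set S : Ω → ℝ := fun ω => ∑ i ∈ s, L i ω with hS
    have hSmeas : Measurable S := Finset.measurable_sum s (fun i _ => hmeas i)
    have hSLq : MemLp S p μ := memLp_finset_sum s (fun i _ => hLq i)
    have intS : Integrable (fun ω => |S ω| ^ q) μ := hint_abs _ hSLq
    have intLj : Integrable (fun ω => |L j ω| ^ q) μ := hint_abs _ (hLq j)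
    have hLjint : Integrable (L j) μ := (hLq j).integrable hp1
    have intLHS : Integrable (fun ω => |L j ω + S ω| ^ q) μ := by
      have : MemLp (fun ω => L j ω + S ω) p μ := (hLq j).add hSLq
      exact hint_abs _ this
    set φ : ℝ → ℝ := fun x => |x| ^ q / x with hφ
    have hφmeas : Measurable φ :=
      (((cont_rpow hq0).comp continuous_abs).measurable).div measurable_id
    have hφS : Measurable (fun ω => φ (S ω)) := hφmeas.comp hSmeas
    have hφbound : ∀ x : ℝ, |φ x| ≤ 1 + |x| ^ q := by
      intro x
      rcases eq_or_ne x 0 with rfl | hx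
      · simp [hφ, Real.zero_rpow hq0.ne']
      · have hax : (0:ℝ) < |x| := abs_pos.2 hx
        have e : |φ x| = |x| ^ (q - 1) := by
          rw [hφ]
          simp only
          rw [abs_div, abs_of_nonneg (Real.rpow_nonneg (abs_nonneg x) q)]
          rw [Real.rpow_sub hax, Real.rpow_one]
        rw [e]
        exact pow_qsub1_le hq1.le _ (abs_nonneg x)
    have intφS : Integrable (fun ω => φ (S ω)) μ := by
      have hbig : Integrable (fun ω => 1 + |S ω| ^ q) μ := (integrable_const 1).add intS
      refine hbig.mono hφS.aestronglyMeasurable ?_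
      filter_upwards with ω
      rw [Real.norm_eq_abs, Real.norm_eq_abs]
      exact (hφbound _).trans (le_abs_self _)
    have hindSL : IndepFun S (L j) μ := by
      have h := iIndepFun.indepFun_finsetSum_of_notMem hind hmeas hj
      have e : S = ∑ i ∈ s, L i := by
        funext ω
        rw [hS, Finset.sum_apply]
      rwa [e]
    have hindφL : IndepFun (fun ω => φ (S ω)) (L j) μ := hindSL.comp hφmeas measurable_id
    have intProd : Integrable (fun ω => φ (S ω) * L j ω) μ := by
      have := hindφL.integrable_mul intφS hLjint
      simpa [Pi.mul_def] using this
    have hzero : ∫ ω, φ (S ω) * L j ω ∂μ = 0 := by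
      have h := hindφL.integral_mul_eq_mul_integral intφS.aestronglyMeasurable hLjint.aestronglyMeasurable
      simpa [hcent j, Pi.mul_apply] using h
    have hptw : ∀ ω, |L j ω + S ω| ^ q ≤
        |S ω| ^ q + q * (φ (S ω) * L j ω) + 2 * |L j ω| ^ q := by
      intro ω
      have h := key_ineq hq1.le hq2 (S ω) (L j ω)
      rw [add_comm (L j ω) (S ω)]
      exact h
    have intRHS : Integrable
        (fun ω => |S ω| ^ q + q * (φ (S ω) * L j ω) + 2 * |L j ω| ^ q) μ :=
      (intS.add (intProd.const_mul q)).add (intLj.const_mul 2)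
    have step1 : ∫ ω, |L j ω + S ω| ^ q ∂μ ≤
        ∫ ω, (|S ω| ^ q + q * (φ (S ω) * L j ω) + 2 * |L j ω| ^ q) ∂μ :=
      integral_mono intLHS intRHS hptw
    have step2 : ∫ ω, (|S ω| ^ q + q * (φ (S ω) * L j ω) + 2 * |L j ω| ^ q) ∂μ =
        (∫ ω, |S ω| ^ q ∂μ) + q * (∫ ω, φ (S ω) * L j ω ∂μ) + 2 * ∫ ω, |L j ω| ^ q ∂μ := by
      have e1 := integral_add (μ := μ) (f := fun ω => |S ω| ^ q + q * (φ (S ω) * L j ω))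
        (g := fun ω => 2 * |L j ω| ^ q) (intS.add (intProd.const_mul q)) (intLj.const_mul 2)
      have e2 := integral_add (μ := μ) (f := fun ω => |S ω| ^ q)
        (g := fun ω => q * (φ (S ω) * L j ω)) intS (intProd.const_mul q)
      have e3 := integral_const_mul (μ := μ) q (fun ω => φ (S ω) * L j ω)
      have e4 := integral_const_mul (μ := μ) 2 (fun ω => |L j ω| ^ q)
      rw [e1, e2, e3, e4]
    simp_rw [Finset.sum_cons]
    calc ∫ ω, |L j ω + ∑ i ∈ s, L i ω| ^ q ∂μ
        ≤ (∫ ω, |S ω| ^ q ∂μ) + q * (∫ ω, φ (S ω) * L j ω ∂μ) + 2 * ∫ ω, |L j ω| ^ q ∂μ := by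
          rw [← step2]; exact step1
      _ = (∫ ω, |S ω| ^ q ∂μ) + 2 * ∫ ω, |L j ω| ^ q ∂μ := by rw [hzero]; ring
      _ ≤ 2 * (∑ i ∈ s, ∫ ω, |L i ω| ^ q ∂μ) + 2 * ∫ ω, |L j ω| ^ q ∂μ := by
          have := ih
          linarith
      _ = 2 * ((∫ ω, |L j ω| ^ q ∂μ) + ∑ i ∈ s, ∫ ω, |L i ω| ^ q ∂μ) := by ring
end

section
/- Let (uⱼ)_{1≤j≤J} be bounded sequences uⱼ : ℕ* → ℝ with lim_{n→∞} (uⱼ(n+1) - uⱼ(n)) = 0, let (αⱼ, βⱼ) be pairs of positive reals, and let (ε_n) be a real sequence with ε_n → 0. Suppose a sequence (D_n) satisfies D_n ≤ ε_n + Σ_{j=1}^J (uⱼ(⌈βⱼ n⌉) - uⱼ(⌈αⱼ n⌉)) for all n ∈ ℕ*. Then liminf_{n→∞} D_n ≤ 0. -/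
open Filter MeasureTheory intervalIntegral

noncomputable def gfun (u : ℕ → ℝ) : ℝ → ℝ := fun s => u ⌈s⌉₊ / s

lemma Cnonneg {u : ℕ → ℝ} {C : ℝ} (hC : ∀ n, |u n| ≤ C) : 0 ≤ C :=
  le_trans (abs_nonneg _) (hC 0)

lemma gfun_meas (u : ℕ → ℝ) : Measurable (gfun u) :=
  (measurable_from_nat.comp Nat.measurable_ceil).div measurable_id

lemma intg (u : ℕ → ℝ) {C : ℝ} (hC : ∀ n, |u n| ≤ C) {a b : ℝ} (ha : 0 < a) (hb : 0 < b) :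
    IntervalIntegrable (gfun u) volume a b := by
  rw [intervalIntegrable_iff]
  have : IsFiniteMeasure (volume.restrict (Set.uIoc a b)) := by
    exact Real.isFiniteMeasure_restrict_Ioc _ _
  apply MeasureTheory.Integrable.mono' (g := fun _ => C / min a b)
    (integrable_const _) ((gfun_meas u).aestronglyMeasurable.restrict)
  rw [ae_restrict_iff' measurableSet_uIoc]
  refine Eventually.of_forall (fun x hx => ?_)
  have h0 : 0 < min a b := lt_min ha hb
  have h1 : min a b < x := hx.1
  have hx0 : 0 < x := h0.trans h1
  rw [Real.norm_eq_abs, gfun, abs_div, abs_of_pos hx0]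
  exact div_le_div₀ (Cnonneg hC) (hC _) h0 h1.le

lemma boundary (u : ℕ → ℝ) {C : ℝ} (hC : ∀ n, |u n| ≤ C) {γ : ℝ} (hγ : 0 < γ)
    {a : ℝ} (ha : 0 < a) :
    |∫ s in (γ * a)..a, gfun u s| ≤ C * |1 - γ| / min γ 1 := by
  have hm : 0 < min γ 1 := lt_min hγ one_pos
  have key : ∀ x ∈ Set.uIoc (γ * a) a, ‖gfun u x‖ ≤ C / (a * min γ 1) := by
    intro x hx
    have hmin : a * min γ 1 ≤ min (γ * a) a := by
      rcases le_total γ 1 with h | h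
      · rw [min_eq_left h, min_eq_left (by nlinarith : γ * a ≤ a)]; nlinarith
      · rw [min_eq_right h, min_eq_right (by nlinarith : a ≤ γ * a)]; nlinarith
    have h0 : 0 < a * min γ 1 := by positivity
    have h1 : a * min γ 1 < x := lt_of_le_of_lt hmin hx.1
    rw [Real.norm_eq_abs, gfun, abs_div, abs_of_pos (h0.trans h1)]
    exact div_le_div₀ (Cnonneg hC) (hC _) h0 h1.le
  have := intervalIntegral.norm_integral_le_of_norm_le_const key
  rw [Real.norm_eq_abs] at this
  have habs : |a - γ * a| = a * |1 - γ| := by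
    rw [show a - γ * a = a * (1 - γ) by ring, abs_mul, abs_of_pos ha]
  calc |∫ s in (γ * a)..a, gfun u s| ≤ C / (a * min γ 1) * |a - γ * a| := this
    _ = C * |1 - γ| / min γ 1 := by
        rw [habs]; field_simp

lemma inc_bound {u : ℕ → ℝ} {η : ℝ} {k₀ : ℕ} (h : ∀ k, k₀ ≤ k → |u (k + 1) - u k| ≤ η)
    {a b : ℕ} (ha : k₀ ≤ a) (hab : a ≤ b) : |u b - u a| ≤ ((b : ℝ) - a) * η := by
  induction b, hab using Nat.le_induction with
  | base => simp
  | succ m hm ih =>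
      have hη : 0 ≤ η := le_trans (abs_nonneg _) (h a ha)
      have h1 : |u (m + 1) - u m| ≤ η := h m (ha.trans hm)
      have := abs_sub_abs_le_abs_sub (u (m+1) - u a) (u (m+1) - u m)
      have htri : |u (m+1) - u a| ≤ |u (m+1) - u m| + |u m - u a| := by
        have := abs_sub_le (u (m+1)) (u m) (u a); linarith [this]
      push_cast
      push_cast at ih
      nlinarith [ih]

lemma log_step {x : ℝ} (hx : 1 ≤ x) : Real.log (x + 1) - Real.log x ≤ 1 / x := by
  have hx0 : 0 < x := lt_of_lt_of_le one_pos hx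
  rw [← Real.log_div (by positivity) (ne_of_gt hx0)]
  have := Real.log_le_sub_one_of_pos (show 0 < (x+1)/x by positivity)
  have : Real.log ((x+1)/x) ≤ (x+1)/x - 1 := this
  have heq : (x+1)/x - 1 = 1/x := by field_simp; ring
  linarith [heq ▸ this]

lemma harmonic_lb {N M : ℕ} (hN : 1 ≤ N) (hNM : N ≤ M) :
    Real.log ((M : ℝ) + 1) - Real.log N ≤ ∑ n ∈ Finset.Icc N M, (1 : ℝ) / n := by
  induction M, hNM using Nat.le_induction with
  | base => rw [Finset.Icc_self, Finset.sum_singleton]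
            exact log_step (by exact_mod_cast hN)
  | succ m hm ih =>
      rw [Finset.sum_Icc_succ_top (hm.trans (Nat.le_succ m))]
      have h1 : Real.log ((m : ℝ) + 1 + 1) - Real.log ((m : ℝ) + 1) ≤ 1 / ((m : ℝ) + 1) := by
        have : (1:ℝ) ≤ (m:ℝ) + 1 := by linarith [Nat.cast_nonneg (α := ℝ) m]
        exact log_step this
      push_cast
      push_cast at ih
      linarith

lemma telescope_ub {N M : ℕ} (hN : 1 ≤ N) (hNM : N ≤ M) :
    ∑ n ∈ Finset.Icc N M, ((1 : ℝ) / n - 1 / (n + 1)) = 1 / N - 1 / (M + 1) := by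
  induction M, hNM using Nat.le_induction with
  | base => rw [Finset.Icc_self, Finset.sum_singleton]
  | succ m hm ih =>
      rw [Finset.sum_Icc_succ_top (hm.trans (Nat.le_succ m)), ih]
      push_cast
      ring

lemma keyA (u : ℕ → ℝ) {C : ℝ} (hC : ∀ n, |u n| ≤ C) {γ : ℝ} (hγ : 0 < γ)
    {η : ℝ} {k₀ : ℕ} (hinc : ∀ k, k₀ ≤ k → |u (k + 1) - u k| ≤ η)
    {N M : ℕ} (hN : 1 ≤ N) (hk : (k₀ : ℝ) ≤ γ * N) (hNM : N ≤ M) :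
    |(∑ n ∈ Finset.Icc N M, u ⌈γ * (n : ℝ)⌉₊ / n) - ∫ s in (N:ℝ)..((M:ℝ)+1), gfun u s|
      ≤ ((⌈γ⌉₊ : ℝ) * η) * (∑ n ∈ Finset.Icc N M, (1:ℝ)/n) + C
        + 2 * (C * |1 - γ| / min γ 1) := by
  have hη0 : 0 ≤ η := le_trans (abs_nonneg _) (hinc k₀ le_rfl)
  have hC0 : 0 ≤ C := Cnonneg hC
  have hN0 : (0:ℝ) < N := by exact_mod_cast hN
  have hM0 : (0:ℝ) < (M:ℝ) + 1 := by positivity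
  set g := gfun u with hg
  have intgF : ∀ c d : ℝ, 0 < c → 0 < d →
      IntervalIntegrable (fun t => γ * g (γ * t)) volume c d := by
    intro c d hc hd
    have h1 := (intg u hC (mul_pos hγ hc) (mul_pos hγ hd)).comp_mul_left (c := γ)
    rw [mul_div_cancel_left₀ _ (ne_of_gt hγ), mul_div_cancel_left₀ _ (ne_of_gt hγ)] at h1
    exact h1.const_mul γ
  have step : ∀ n : ℕ, N ≤ n →
      |u ⌈γ * (n:ℝ)⌉₊ / n - ∫ t in (n:ℝ)..((n:ℝ)+1), γ * g (γ * t)|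
        ≤ (⌈γ⌉₊ : ℝ) * η / n + C * (1/n - 1/((n:ℝ)+1)) := by
    intro n hn
    have hn1 : (1:ℝ) ≤ (n:ℝ) := by exact_mod_cast hN.trans hn
    have hn0 : (0:ℝ) < n := lt_of_lt_of_le one_pos hn1
    have hNn : (N:ℝ) ≤ n := by exact_mod_cast hn
    have hpt : ∀ t ∈ Set.uIoc ((n:ℝ)) ((n:ℝ)+1),
        ‖u ⌈γ * (n:ℝ)⌉₊ / n - γ * g (γ * t)‖
          ≤ (⌈γ⌉₊ : ℝ) * η / n + C * (1/n - 1/((n:ℝ)+1)) := by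
      intro t ht
      rw [Set.uIoc_of_le (by linarith)] at ht
      obtain ⟨ht1, ht2⟩ := ht
      have ht0 : (0:ℝ) < t := hn0.trans ht1
      have hgt : γ * g (γ * t) = u ⌈γ * t⌉₊ / t := by
        rw [hg]; simp only [gfun]
        field_simp
      have hc1 : ⌈γ * (n:ℝ)⌉₊ ≤ ⌈γ * t⌉₊ := Nat.ceil_le_ceil (by nlinarith)
      have hc2 : ⌈γ * t⌉₊ ≤ ⌈γ * (n:ℝ)⌉₊ + ⌈γ⌉₊ := by
        calc ⌈γ * t⌉₊ ≤ ⌈γ * (n:ℝ) + γ⌉₊ := Nat.ceil_le_ceil (by nlinarith)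
          _ ≤ ⌈γ * (n:ℝ)⌉₊ + ⌈γ⌉₊ := Nat.ceil_add_le _ _
      have hk0 : k₀ ≤ ⌈γ * (n:ℝ)⌉₊ := by
        have h1 : (k₀:ℝ) ≤ γ * n := le_trans hk (by nlinarith)
        have h2 : (γ:ℝ) * n ≤ (⌈γ * (n:ℝ)⌉₊ : ℝ) := Nat.le_ceil _
        exact_mod_cast le_trans h1 h2
      have hub : |u ⌈γ * t⌉₊ - u ⌈γ * (n:ℝ)⌉₊| ≤ (⌈γ⌉₊:ℝ) * η := by
        have h3 := inc_bound hinc hk0 hc1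
        have h4 : ((⌈γ * t⌉₊:ℝ) - (⌈γ * (n:ℝ)⌉₊:ℝ)) ≤ (⌈γ⌉₊:ℝ) := by
          have : (⌈γ * t⌉₊:ℝ) ≤ (⌈γ * (n:ℝ)⌉₊:ℝ) + (⌈γ⌉₊:ℝ) := by exact_mod_cast hc2
          linarith
        nlinarith
      have hdecomp : u ⌈γ * (n:ℝ)⌉₊ / n - u ⌈γ * t⌉₊ / t
          = (u ⌈γ * (n:ℝ)⌉₊ - u ⌈γ * t⌉₊)/t + u ⌈γ * (n:ℝ)⌉₊ * (1/(n:ℝ) - 1/t) := by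
        field_simp
        ring
      rw [hgt, Real.norm_eq_abs, hdecomp]
      have e1 : |(u ⌈γ * (n:ℝ)⌉₊ - u ⌈γ * t⌉₊)/t| ≤ (⌈γ⌉₊:ℝ) * η / n := by
        rw [abs_div, abs_of_pos ht0]
        exact div_le_div₀ (by positivity) (by rw [abs_sub_comm]; exact hub) hn0 ht1.le
      have e2 : |u ⌈γ * (n:ℝ)⌉₊ * (1/(n:ℝ) - 1/t)| ≤ C * (1/(n:ℝ) - 1/((n:ℝ)+1)) := by
        rw [abs_mul]
        apply mul_le_mul (hC _) ?_ (abs_nonneg _) hC0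
        have hle1 : 1/t ≤ 1/(n:ℝ) := one_div_le_one_div_of_le hn0 ht1.le
        have hle2 : 1/((n:ℝ)+1) ≤ 1/t := one_div_le_one_div_of_le ht0 ht2
        rw [abs_of_nonneg (by linarith)]
        linarith
      calc |(u ⌈γ * (n:ℝ)⌉₊ - u ⌈γ * t⌉₊)/t + u ⌈γ * (n:ℝ)⌉₊ * (1/(n:ℝ) - 1/t)|
          ≤ |(u ⌈γ * (n:ℝ)⌉₊ - u ⌈γ * t⌉₊)/t| + |u ⌈γ * (n:ℝ)⌉₊ * (1/(n:ℝ) - 1/t)| :=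
            abs_add_le _ _
        _ ≤ (⌈γ⌉₊ : ℝ) * η / n + C * (1/n - 1/((n:ℝ)+1)) := add_le_add e1 e2
    have hint : IntervalIntegrable (fun t => γ * g (γ * t)) volume (n:ℝ) ((n:ℝ)+1) :=
      intgF _ _ hn0 (by linarith)
    have hbig := intervalIntegral.norm_integral_le_of_norm_le_const hpt
    rw [intervalIntegral.integral_sub intervalIntegrable_const hint,
      intervalIntegral.integral_const] at hbig
    simp only [Real.norm_eq_abs, add_sub_cancel_left, abs_one, mul_one, smul_eq_mul,
      one_mul] at hbig
    exact hbig
  have hadj : ∑ n ∈ Finset.Icc N M, ∫ t in (n:ℝ)..((n:ℝ)+1), γ * g (γ * t)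
      = ∫ t in (N:ℝ)..((M:ℝ)+1), γ * g (γ * t) := by
    have := intervalIntegral.sum_integral_adjacent_intervals_Ico (μ := volume)
      (f := fun t => γ * g (γ * t)) (a := fun k : ℕ => (k:ℝ)) (m := N) (n := M+1)
      (by omega) ?_
    · rw [← Finset.Ico_add_one_right_eq_Icc]
      push_cast at this
      exact this
    · intro k hk
      simp only [Set.mem_Ico] at hk
      have hk0 : (0:ℝ) < k := by
        have : 1 ≤ k := le_trans hN hk.1
        exact_mod_cast this
      exact intgF _ _ hk0 (by push_cast; linarith)
  have hE1 : |(∑ n ∈ Finset.Icc N M, u ⌈γ * (n:ℝ)⌉₊ / n)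
      - ∫ t in (N:ℝ)..((M:ℝ)+1), γ * g (γ * t)|
      ≤ ((⌈γ⌉₊ : ℝ) * η) * (∑ n ∈ Finset.Icc N M, (1:ℝ)/n) + C := by
    rw [← hadj, ← Finset.sum_sub_distrib]
    calc |∑ n ∈ Finset.Icc N M, (u ⌈γ * (n:ℝ)⌉₊ / n - ∫ t in (n:ℝ)..((n:ℝ)+1), γ * g (γ * t))|
        ≤ ∑ n ∈ Finset.Icc N M, |u ⌈γ * (n:ℝ)⌉₊ / n - ∫ t in (n:ℝ)..((n:ℝ)+1), γ * g (γ * t)| :=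
          Finset.abs_sum_le_sum_abs _ _
      _ ≤ ∑ n ∈ Finset.Icc N M, ((⌈γ⌉₊ : ℝ) * η / n + C * (1/n - 1/((n:ℝ)+1))) := by
          apply Finset.sum_le_sum
          intro n hn
          exact step n (Finset.mem_Icc.mp hn).1
      _ = ((⌈γ⌉₊ : ℝ) * η) * (∑ n ∈ Finset.Icc N M, (1:ℝ)/n)
            + C * ∑ n ∈ Finset.Icc N M, ((1:ℝ)/n - 1/((n:ℝ)+1)) := by
          rw [Finset.sum_add_distrib, Finset.mul_sum, Finset.mul_sum]
          congr 1
          apply Finset.sum_congr rfl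
          intro n _
          ring
      _ ≤ ((⌈γ⌉₊ : ℝ) * η) * (∑ n ∈ Finset.Icc N M, (1:ℝ)/n) + C := by
          rw [telescope_ub hN hNM]
          have h1 : (1:ℝ)/N ≤ 1 := by
            rw [div_le_one hN0]; exact_mod_cast hN
          have h2 : (0:ℝ) ≤ 1/((M:ℝ)+1) := by positivity
          nlinarith
  have hsubst : ∫ t in (N:ℝ)..((M:ℝ)+1), γ * g (γ * t)
      = ∫ s in (γ*(N:ℝ))..(γ*((M:ℝ)+1)), g s := by
    rw [intervalIntegral.integral_const_mul,
      intervalIntegral.integral_comp_mul_left g (ne_of_gt hγ), smul_eq_mul, ← mul_assoc,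
      mul_inv_cancel₀ (ne_of_gt hγ), one_mul]
  have hint1 : IntervalIntegrable g volume (γ*(N:ℝ)) (N:ℝ) := intg u hC (by positivity) hN0
  have hint2 : IntervalIntegrable g volume (N:ℝ) ((M:ℝ)+1) := intg u hC hN0 hM0
  have hint3 : IntervalIntegrable g volume ((M:ℝ)+1) (γ*((M:ℝ)+1)) := intg u hC hM0 (by positivity)
  have hsplit1 := intervalIntegral.integral_add_adjacent_intervals hint1 hint2
  have hsplit2 := intervalIntegral.integral_add_adjacent_intervals (hint1.trans hint2) hint3
  have hb1 : |∫ s in (γ*(N:ℝ))..(N:ℝ), g s| ≤ C * |1 - γ| / min γ 1 := boundary u hC hγ hN0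
  have hb2 : |∫ s in ((M:ℝ)+1)..(γ*((M:ℝ)+1)), g s| ≤ C * |1 - γ| / min γ 1 := by
    rw [intervalIntegral.integral_symm, abs_neg]
    exact boundary u hC hγ hM0
  have htri := abs_sub_le (∑ n ∈ Finset.Icc N M, u ⌈γ * (n:ℝ)⌉₊ / n)
    (∫ t in (N:ℝ)..((M:ℝ)+1), γ * g (γ * t)) (∫ s in (N:ℝ)..((M:ℝ)+1), g s)
  have habs2 : |(∫ t in (N:ℝ)..((M:ℝ)+1), γ * g (γ * t)) - ∫ s in (N:ℝ)..((M:ℝ)+1), g s|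
      ≤ 2 * (C * |1 - γ| / min γ 1) := by
    have heq : (∫ t in (N:ℝ)..((M:ℝ)+1), γ * g (γ * t)) - ∫ s in (N:ℝ)..((M:ℝ)+1), g s
        = (∫ s in (γ*(N:ℝ))..(N:ℝ), g s) + ∫ s in ((M:ℝ)+1)..(γ*((M:ℝ)+1)), g s := by
      rw [hsubst]
      linarith [hsplit1, hsplit2]
    rw [heq]
    calc |(∫ s in (γ*(N:ℝ))..(N:ℝ), g s) + ∫ s in ((M:ℝ)+1)..(γ*((M:ℝ)+1)), g s|
        ≤ |∫ s in (γ*(N:ℝ))..(N:ℝ), g s| + |∫ s in ((M:ℝ)+1)..(γ*((M:ℝ)+1)), g s| := abs_add_le _ _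
      _ ≤ 2 * (C * |1 - γ| / min γ 1) := by linarith
  linarith



/-- Kenyon–Peres / Feng–Huang type combinatorial lemma: if
`D n ≤ ε_n + Σⱼ (uⱼ(⌈βⱼ n⌉) − uⱼ(⌈αⱼ n⌉))` with `ε_n → 0` and each `uⱼ` bounded with
vanishing increments, then `liminf D ≤ 0` (i.e. `D n < δ` frequently for every `δ > 0`). -/
theorem stmt10 (J : ℕ) (u : Fin J → ℕ → ℝ)
    (hbd : ∀ j, ∃ C : ℝ, ∀ n, |u j n| ≤ C)
    (hdiff : ∀ j, Tendsto (fun n => u j (n + 1) - u j n) atTop (nhds 0))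
    (α β : Fin J → ℝ) (hα : ∀ j, 0 < α j) (hβ : ∀ j, 0 < β j)
    (ε : ℕ → ℝ) (hε : Tendsto ε atTop (nhds 0))
    (D : ℕ → ℝ)
    (hD : ∀ n : ℕ, 1 ≤ n → D n ≤ ε n + ∑ j, (u j ⌈β j * n⌉₊ - u j ⌈α j * n⌉₊)) :
    ∀ δ > (0 : ℝ), ∃ᶠ n in atTop, D n < δ := by
  intro δ hδ
  by_contra hcon
  rw [Filter.not_frequently] at hcon
  choose C hCu using hbd
  set W : ℝ := ∑ j, ((⌈β j⌉₊ : ℝ) + (⌈α j⌉₊ : ℝ)) with hWdef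
  have hW0 : 0 ≤ W := Finset.sum_nonneg (fun j _ => by positivity)
  set η : ℝ := δ / (4 * (W + 1)) with hηdef
  have hη0 : 0 < η := by positivity
  have hk0 : ∀ j, ∃ k₀ : ℕ, ∀ k, k₀ ≤ k → |u j (k + 1) - u j k| ≤ η := by
    intro j
    obtain ⟨K, hK⟩ := Metric.tendsto_atTop.mp (hdiff j) η hη0
    exact ⟨K, fun k hk => by
      have := hK k hk
      rw [Real.dist_eq, sub_zero] at this
      exact this.le⟩
  choose k₀ hk₀ using hk0
  have hQ : ∀ᶠ n : ℕ in atTop,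
      ((1 ≤ n ∧ ¬ D n < δ) ∧ |ε n| ≤ δ / 2) ∧
        ∀ j, (k₀ j : ℝ) ≤ α j * n ∧ (k₀ j : ℝ) ≤ β j * n := by
    refine (((eventually_ge_atTop 1).and hcon).and ?_).and (eventually_all.mpr fun j => ?_)
    · obtain ⟨K, hK⟩ := Metric.tendsto_atTop.mp hε (δ/2) (by positivity)
      filter_upwards [eventually_ge_atTop K] with n hn
      have := hK n hn
      rw [Real.dist_eq, sub_zero] at this
      exact this.le
    · have ha : Tendsto (fun n : ℕ => α j * n) atTop atTop :=
        (tendsto_natCast_atTop_atTop (R := ℝ)).const_mul_atTop (hα j)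
      have hb : Tendsto (fun n : ℕ => β j * n) atTop atTop :=
        (tendsto_natCast_atTop_atTop (R := ℝ)).const_mul_atTop (hβ j)
      exact (ha.eventually_ge_atTop _).and (hb.eventually_ge_atTop _)
  obtain ⟨N₀, hN₀⟩ := eventually_atTop.mp hQ
  set N : ℕ := max N₀ 1 with hNdef
  have hNQ : ∀ n, N ≤ n → ((1 ≤ n ∧ ¬ D n < δ) ∧ |ε n| ≤ δ / 2) ∧
      ∀ j, (k₀ j : ℝ) ≤ α j * n ∧ (k₀ j : ℝ) ≤ β j * n :=
    fun n hn => hN₀ n (le_trans (le_max_left _ _) hn)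
  have hN1 : 1 ≤ N := le_max_right _ _
  -- lower bound on S n
  have hS : ∀ n, N ≤ n → δ / 2 ≤ ∑ j, (u j ⌈β j * (n:ℝ)⌉₊ - u j ⌈α j * (n:ℝ)⌉₊) := by
    intro n hn
    obtain ⟨⟨⟨hn1, hnD⟩, hnε⟩, -⟩ := hNQ n hn
    have h1 : δ ≤ D n := not_lt.mp hnD
    have h2 := hD n hn1
    have h3 : ε n ≤ δ/2 := (abs_le.mp hnε).2
    linarith
  set A : ℝ := ∑ j, (2 * C j + 2 * (C j * |1 - β j| / min (β j) 1)
      + 2 * (C j * |1 - α j| / min (α j) 1)) with hAdef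
  -- main estimate for all M ≥ N
  have hmain : ∀ M, N ≤ M → δ / 4 * (∑ n ∈ Finset.Icc N M, (1:ℝ)/n) ≤ A := by
    intro M hNM
    set H : ℝ := ∑ n ∈ Finset.Icc N M, (1:ℝ)/n with hHdef
    have hH0 : 0 ≤ H := Finset.sum_nonneg (fun n _ => by positivity)
    have hlow : δ / 2 * H ≤ ∑ n ∈ Finset.Icc N M,
        (∑ j, (u j ⌈β j * (n:ℝ)⌉₊ - u j ⌈α j * (n:ℝ)⌉₊)) / (n:ℝ) := by
      rw [hHdef, Finset.mul_sum]
      apply Finset.sum_le_sum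
      intro n hn
      obtain ⟨hn1, -⟩ := Finset.mem_Icc.mp hn
      have hn0 : (0:ℝ) < n := by
        have : 1 ≤ n := le_trans hN1 hn1
        exact_mod_cast this
      rw [mul_one_div]
      exact div_le_div_of_nonneg_right (hS n hn1) hn0.le
    have hswap : ∑ n ∈ Finset.Icc N M,
        (∑ j, (u j ⌈β j * (n:ℝ)⌉₊ - u j ⌈α j * (n:ℝ)⌉₊)) / (n:ℝ)
        = ∑ j, ((∑ n ∈ Finset.Icc N M, u j ⌈β j * (n:ℝ)⌉₊ / n)
            - ∑ n ∈ Finset.Icc N M, u j ⌈α j * (n:ℝ)⌉₊ / n) := by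
      simp only [Finset.sum_div, sub_div]
      rw [Finset.sum_comm]
      exact Finset.sum_congr rfl (fun j _ => Finset.sum_sub_distrib _ _)
    have hup : ∀ j : Fin J,
        (∑ n ∈ Finset.Icc N M, u j ⌈β j * (n:ℝ)⌉₊ / n)
          - ∑ n ∈ Finset.Icc N M, u j ⌈α j * (n:ℝ)⌉₊ / n
        ≤ ((⌈β j⌉₊ : ℝ) + (⌈α j⌉₊ : ℝ)) * η * H
          + (2 * C j + 2 * (C j * |1 - β j| / min (β j) 1)
            + 2 * (C j * |1 - α j| / min (α j) 1)) := by
      intro j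
      have hkα : (k₀ j : ℝ) ≤ α j * N := ((hNQ N le_rfl).2 j).1
      have hkβ : (k₀ j : ℝ) ≤ β j * N := ((hNQ N le_rfl).2 j).2
      have h1 := keyA (u j) (hCu j) (hβ j) (hk₀ j) hN1 hkβ hNM
      have h2 := keyA (u j) (hCu j) (hα j) (hk₀ j) hN1 hkα hNM
      rw [← hHdef] at h1 h2
      have e1 := abs_le.mp h1
      have e2 := abs_le.mp h2
      nlinarith [e1.1, e1.2, e2.1, e2.2]
    have hsum : ∑ n ∈ Finset.Icc N M,
        (∑ j, (u j ⌈β j * (n:ℝ)⌉₊ - u j ⌈α j * (n:ℝ)⌉₊)) / (n:ℝ) ≤ η * W * H + A := by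
      rw [hswap]
      calc ∑ j, ((∑ n ∈ Finset.Icc N M, u j ⌈β j * (n:ℝ)⌉₊ / n)
            - ∑ n ∈ Finset.Icc N M, u j ⌈α j * (n:ℝ)⌉₊ / n)
          ≤ ∑ j, (((⌈β j⌉₊ : ℝ) + (⌈α j⌉₊ : ℝ)) * η * H
            + (2 * C j + 2 * (C j * |1 - β j| / min (β j) 1)
              + 2 * (C j * |1 - α j| / min (α j) 1))) := Finset.sum_le_sum (fun j _ => hup j)
        _ = η * W * H + A := by
            rw [Finset.sum_add_distrib, hAdef, hWdef, ← Finset.sum_mul, ← Finset.sum_mul]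
            ring
    have hWη : η * W ≤ δ / 4 := by
      rw [hηdef]
      rw [div_mul_eq_mul_div, div_le_div_iff₀ (by positivity) (by norm_num)]
      nlinarith
    nlinarith [hlow, hsum, hWη, hH0]
  -- contradiction
  have hA0 : 0 ≤ A := by
    rw [hAdef]
    apply Finset.sum_nonneg
    intro j _
    have := Cnonneg (hCu j)
    have h1 : (0:ℝ) < min (β j) 1 := lt_min (hβ j) one_pos
    have h2 : (0:ℝ) < min (α j) 1 := lt_min (hα j) one_pos
    positivity
  set x : ℝ := Real.log N + 4 * A / δ + 1 with hxdef
  set M : ℕ := max N ⌈Real.exp x⌉₊ with hMdef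
  have hNM : N ≤ M := le_max_left _ _
  clear_value x M
  have hMx : Real.exp x ≤ (M : ℝ) := by
    have h1 : ⌈Real.exp x⌉₊ ≤ M := by rw [hMdef]; exact le_max_right _ _
    exact le_trans (Nat.le_ceil _) (by exact_mod_cast h1)
  have hH : x - Real.log N ≤ ∑ n ∈ Finset.Icc N M, (1:ℝ)/n := by
    have h1 := harmonic_lb hN1 hNM
    have h2 : x ≤ Real.log ((M:ℝ) + 1) := by
      calc x = Real.log (Real.exp x) := (Real.log_exp x).symm
        _ ≤ Real.log ((M:ℝ) + 1) := Real.log_le_log (Real.exp_pos x) (by linarith)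
    linarith
  have hfin := hmain M hNM
  have : δ / 4 * (4 * A / δ + 1) ≤ A := by
    apply le_trans _ hfin
    apply mul_le_mul_of_nonneg_left _ (by positivity : (0:ℝ) ≤ δ/4)
    calc 4 * A / δ + 1 = x - Real.log N := by rw [hxdef]; ring
      _ ≤ _ := hH
  have heq : δ / 4 * (4 * A / δ + 1) = A + δ / 4 := by
    field_simp
  linarith [heq ▸ this]
end

section
/- With the setup of the self-affine symbolic space (X₁, d_γ) and ℓᵢ(n) = min{p ∈ ℕ : p ≥ (γ₁+…+γᵢ)n/γ₁}, the closed ball of center x ∈ X₁ and radius e^{−n/γ₁} is B(x, e^{−n/γ₁}) = {y ∈ X₁ : Πᵢ(y_{|ℓᵢ(n)}) = Πᵢ(x_{|ℓᵢ(n)}) for all 1 ≤ i ≤ k}, where y_{|m} denotes the prefix of y of length m. -/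
open scoped Classical

/-- The letter map `Πᵢ : A₀ → Aᵢ` obtained by composing the one-block factor maps
`π₀ = id`, `πⱼ : Aⱼ → Aⱼ₊₁`. -/
def blockMap (A : ℕ → Type*) (π : ∀ i, A i → A (i + 1)) : ∀ i, A 0 → A i
  | 0 => id
  | (i + 1) => π i ∘ blockMap A π i

/-- The self-affine distance
`d_γ(x,y) = max_{i<k} exp(−|Πᵢ(x) ∧ Πᵢ(y)| / (γ₀+⋯+γᵢ))`. -/
noncomputable def dGamma (k : ℕ) (γ : ℕ → ℝ) (A : ℕ → Type*)
    (π : ∀ i, A i → A (i + 1)) (x y : ℕ → A 0) : ℝ :=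
  sSup {r : ℝ | ∃ i < k, r =
    if ∃ n, blockMap A π i (x n) ≠ blockMap A π i (y n) then
      Real.exp (-((sInf {n : ℕ | blockMap A π i (x n) ≠ blockMap A π i (y n)} : ℕ) : ℝ)
        / ∑ j ∈ Finset.range (i + 1), γ j)
    else 0}

/-- Description of the closed ball `B(x, e^{−n/γ₁})` in `(X₁, d_γ)`: it consists of
those `y` whose projections `Πᵢ(y)` agree with `Πᵢ(x)` on the first `ℓᵢ(n)` letters. -/
theorem stmt15 (k : ℕ) (hk : 0 < k) (A : ℕ → Type*) [∀ i, Fintype (A i)]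
    (π : ∀ i, A i → A (i + 1)) (γ : ℕ → ℝ) (hγ0 : 0 < γ 0) (hγ : ∀ i, 0 ≤ γ i)
    (x : ℕ → A 0) (n : ℕ) :
    {y : ℕ → A 0 | dGamma k γ A π x y ≤ Real.exp (-(n : ℝ) / γ 0)} =
      {y : ℕ → A 0 | ∀ i < k,
        ∀ m < ⌈(∑ j ∈ Finset.range (i + 1), γ j) * (n : ℝ) / γ 0⌉₊,
          blockMap A π i (y m) = blockMap A π i (x m)} := by
  ext y
  simp only [Set.mem_setOf_eq, dGamma]
  set f : ℕ → ℝ := fun i =>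
    if ∃ m, blockMap A π i (x m) ≠ blockMap A π i (y m) then
      Real.exp (-((sInf {m : ℕ | blockMap A π i (x m) ≠ blockMap A π i (y m)} : ℕ) : ℝ)
        / ∑ j ∈ Finset.range (i + 1), γ j)
    else 0 with hf
  have hexp : (0:ℝ) < Real.exp (-(n:ℝ)/γ 0) := Real.exp_pos _
  have key : ∀ i < k,
      (f i ≤ Real.exp (-(n:ℝ)/γ 0)) ↔
      ∀ m < ⌈(∑ j ∈ Finset.range (i + 1), γ j) * (n : ℝ) / γ 0⌉₊,
        blockMap A π i (y m) = blockMap A π i (x m) := by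
    intro i hi
    have hS : 0 < ∑ j ∈ Finset.range (i+1), γ j :=
      lt_of_lt_of_le hγ0 (Finset.single_le_sum (fun j _ => hγ j)
        (Finset.mem_range.mpr i.succ_pos))
    by_cases h : ∃ m, blockMap A π i (x m) ≠ blockMap A π i (y m)
    · rw [hf]
      simp only [if_pos h]
      set D := {m : ℕ | blockMap A π i (x m) ≠ blockMap A π i (y m)} with hD
      have hDne : D.Nonempty := h
      rw [Real.exp_le_exp, neg_div, neg_div, neg_le_neg_iff, div_le_div_iff₀ hγ0 hS]
      constructor
      · intro hle m hm
        by_contra hne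
        have hmem : m ∈ D := fun e => hne e.symm
        have hNm : sInf D ≤ m := Nat.sInf_le hmem
        have h1 : (∑ j ∈ Finset.range (i+1), γ j) * n / γ 0 ≤ ((sInf D : ℕ) : ℝ) := by
          rw [div_le_iff₀ hγ0]
          linarith [mul_comm ((n:ℝ)) (∑ j ∈ Finset.range (i+1), γ j)]
        have h2 := Nat.ceil_le.mpr h1
        omega
      · intro hall
        have hmem := Nat.sInf_mem hDne
        have hge : ⌈(∑ j ∈ Finset.range (i+1), γ j) * n / γ 0⌉₊ ≤ sInf D := by
          by_contra hlt
          push_neg at hlt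
          exact hmem (hall _ hlt).symm
        have h1 : (∑ j ∈ Finset.range (i+1), γ j) * n / γ 0 ≤ ((sInf D : ℕ) : ℝ) :=
          le_trans (Nat.le_ceil _) (by exact_mod_cast hge)
        rw [div_le_iff₀ hγ0] at h1
        linarith [mul_comm ((n:ℝ)) (∑ j ∈ Finset.range (i+1), γ j)]
    · rw [hf]
      simp only [if_neg h]
      push_neg at h
      constructor
      · intro _ m _
        exact (h m).symm
      · intro _
        exact hexp.le
  have hset : {r : ℝ | ∃ i < k, r =
      if ∃ m, blockMap A π i (x m) ≠ blockMap A π i (y m) then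
        Real.exp (-((sInf {m : ℕ | blockMap A π i (x m) ≠ blockMap A π i (y m)} : ℕ) : ℝ)
          / ∑ j ∈ Finset.range (i + 1), γ j)
      else 0} = {r : ℝ | ∃ i < k, r = f i} := rfl
  rw [hset]
  have hfin : {r : ℝ | ∃ i < k, r = f i}.Finite := by
    apply Set.Finite.subset ((Set.finite_Iio k).image f)
    rintro r ⟨i, hi, rfl⟩
    exact ⟨i, hi, rfl⟩
  have hne : {r : ℝ | ∃ i < k, r = f i}.Nonempty := ⟨f 0, 0, hk, rfl⟩
  constructor
  · intro hle i hi
    exact (key i hi).mp (le_trans (le_csSup hfin.bddAbove ⟨i, hi, rfl⟩) hle)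
  · intro hall
    apply csSup_le hne
    rintro r ⟨i, hi, rfl⟩
    exact (key i hi).mpr (hall i hi)
end

section
/- Let W = (W_a)_{a∈A} be a nonnegative random vector indexed by a finite set A with E(Σ_a W_a) = 1, and suppose T_W is affine on [0,∞), where T_W(q) = −log E(Σ_{a∈A} W_a^q) (with convention 0^q = 0 for q > 0 and 0^0 = 0). Then almost surely, for each a ∈ A, on the event {W_a > 0} one has W_a = 1/E(N), where N = #{a ∈ A : W_a > 0}. -/
open MeasureTheory
open scoped Classical

/-- If the moment function `T_W(q) = −log E(Σ_a W_a^q)` (with `0^q = 0`, `0^0 = 0`) is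
affine on `[0,∞)`, then each positive `W_a` almost surely equals `1/E(N)` where
`N = #{a : W_a > 0}`. -/
theorem stmt16 {Ω A : Type*} [MeasurableSpace Ω] (μ : Measure Ω)
    [IsProbabilityMeasure μ] [Fintype A] (W : Ω → A → ℝ)
    (hmeas : ∀ a, Measurable fun ω => W ω a)
    (hnonneg : ∀ ω a, 0 ≤ W ω a)
    (hmean : ∫ ω, ∑ a, W ω a ∂μ = 1)
    (hint : ∀ q : ℝ, 0 ≤ q →
      Integrable (fun ω => ∑ a, if W ω a = 0 then 0 else W ω a ^ q) μ)
    (haffine : ∃ c d : ℝ, ∀ q : ℝ, 0 ≤ q →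
      -Real.log (∫ ω, ∑ a, (if W ω a = 0 then 0 else W ω a ^ q) ∂μ) = c * q + d) :
    ∀ a, ∀ᵐ ω ∂μ, 0 < W ω a →
      W ω a = 1 / ∫ ω', ((Finset.univ.filter fun b => 0 < W ω' b).card : ℝ) ∂μ := by
  obtain ⟨c, d, haff⟩ := haffine
  set S0 : Ω → ℝ := fun ω => ∑ a, if W ω a = 0 then 0 else 1 with hS0def
  set S1 : Ω → ℝ := fun ω => ∑ a, W ω a with hS1def
  set S2 : Ω → ℝ := fun ω => ∑ a, if W ω a = 0 then 0 else W ω a ^ 2 with hS2def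
  -- pointwise identifications with rpow expressions
  have e0 : ∀ ω, (∑ a, if W ω a = 0 then 0 else W ω a ^ (0:ℝ)) = S0 ω := by
    intro ω
    refine Finset.sum_congr rfl fun a _ => ?_
    split_ifs with h
    · rfl
    · exact Real.rpow_zero _
  have e1 : ∀ ω, (∑ a, if W ω a = 0 then 0 else W ω a ^ (1:ℝ)) = S1 ω := by
    intro ω
    refine Finset.sum_congr rfl fun a _ => ?_
    split_ifs with h
    · exact h.symm
    · exact Real.rpow_one _
  have e2 : ∀ ω, (∑ a, if W ω a = 0 then 0 else W ω a ^ (2:ℝ)) = S2 ω := by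
    intro ω
    refine Finset.sum_congr rfl fun a _ => ?_
    split_ifs with h
    · rfl
    · rw [show (2:ℝ) = ((2:ℕ):ℝ) by norm_num, Real.rpow_natCast]
  -- integrability
  have hintS0 : Integrable S0 μ :=
    (hint 0 le_rfl).congr (Filter.Eventually.of_forall e0)
  have hintS1 : Integrable S1 μ :=
    (hint 1 zero_le_one).congr (Filter.Eventually.of_forall e1)
  have hintS2 : Integrable S2 μ :=
    (hint 2 (by norm_num)).congr (Filter.Eventually.of_forall e2)
  set I0 : ℝ := ∫ ω, S0 ω ∂μ with hI0def
  set I2 : ℝ := ∫ ω, S2 ω ∂μ with hI2def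
  have hI1 : ∫ ω, S1 ω ∂μ = 1 := hmean
  -- affine relations at q = 0, 1, 2
  have haff0 : -Real.log I0 = d := by
    have := haff 0 le_rfl
    rw [integral_congr_ae (Filter.Eventually.of_forall e0)] at this
    simpa using this
  have haff1 : c + d = 0 := by
    have := haff 1 zero_le_one
    rw [integral_congr_ae (Filter.Eventually.of_forall e1), hI1] at this
    simp at this
    linarith
  have haff2 : -Real.log I2 = 2 * c + d := by
    have := haff 2 (by norm_num)
    rw [integral_congr_ae (Filter.Eventually.of_forall e2)] at this
    simpa [mul_comm] using this
  -- nonnegativity of the pointwise sums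
  have hS0nn : ∀ ω, 0 ≤ S0 ω := fun ω =>
    Finset.sum_nonneg fun a _ => by split_ifs <;> norm_num
  have hS2nn : ∀ ω, 0 ≤ S2 ω := fun ω =>
    Finset.sum_nonneg fun a _ => by split_ifs <;> positivity
  have hS1nn : ∀ ω, 0 ≤ S1 ω := fun ω =>
    Finset.sum_nonneg fun a _ => hnonneg ω a
  -- I0 > 0
  have hI0pos : 0 < I0 := by
    rcases lt_or_eq_of_le (integral_nonneg (f := S0) hS0nn) with h | h
    · exact h
    · exfalso
      have hz : S0 =ᵐ[μ] 0 :=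
        (integral_eq_zero_iff_of_nonneg hS0nn hintS0).mp h.symm
      have : ∫ ω, S1 ω ∂μ = 0 := by
        rw [integral_congr_ae (g := fun _ => (0:ℝ))]
        · simp
        · filter_upwards [hz] with ω hω
          have hall : ∀ a, W ω a = 0 := by
            intro a
            by_contra hne
            have hterm : (if W ω a = 0 then (0:ℝ) else 1) = 0 := by
              have := (Finset.sum_eq_zero_iff_of_nonneg
                (fun a _ => by split_ifs <;> norm_num)).mp hω a (Finset.mem_univ a)
              exact this
            rw [if_neg hne] at hterm
            norm_num at hterm
          simp [hS1def, hall]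
      rw [hI1] at this; norm_num at this
  -- I2 > 0
  have hI2pos : 0 < I2 := by
    rcases lt_or_eq_of_le (integral_nonneg (f := S2) hS2nn) with h | h
    · exact h
    · exfalso
      have hz : S2 =ᵐ[μ] 0 :=
        (integral_eq_zero_iff_of_nonneg hS2nn hintS2).mp h.symm
      have : ∫ ω, S1 ω ∂μ = 0 := by
        rw [integral_congr_ae (g := fun _ => (0:ℝ))]
        · simp
        · filter_upwards [hz] with ω hω
          have hall : ∀ a, W ω a = 0 := by
            intro a
            by_contra hne
            have hterm : (if W ω a = 0 then (0:ℝ) else W ω a ^ 2) = 0 :=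
              (Finset.sum_eq_zero_iff_of_nonneg
                (fun a _ => by split_ifs <;> positivity)).mp hω a (Finset.mem_univ a)
            rw [if_neg hne] at hterm
            exact hne (pow_eq_zero_iff (by norm_num) |>.mp hterm)
          simp [hS1def, hall]
      rw [hI1] at this; norm_num at this
  -- I2 = I0⁻¹
  have hI2 : I2 = I0⁻¹ := by
    have hlog : Real.log I2 = -Real.log I0 := by
      have hc : c = -d := by linarith
      rw [hc] at haff2
      linarith
    calc I2 = Real.exp (Real.log I2) := (Real.exp_log hI2pos).symm
    _ = Real.exp (-Real.log I0) := by rw [hlog]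
    _ = (Real.exp (Real.log I0))⁻¹ := by rw [Real.exp_neg]
    _ = I0⁻¹ := by rw [Real.exp_log hI0pos]
  set lam : ℝ := I0⁻¹ with hlamdef
  -- the quadratic deviation
  set h : Ω → ℝ := fun ω => ∑ a, if W ω a = 0 then 0 else (W ω a - lam) ^ 2 with hhdef
  have hhnn : ∀ ω, 0 ≤ h ω := fun ω =>
    Finset.sum_nonneg fun a _ => by split_ifs <;> positivity
  have hhe : ∀ ω, h ω = S2 ω - 2 * lam * S1 ω + lam ^ 2 * S0 ω := by
    intro ω
    simp only [hhdef, hS2def, hS1def, hS0def, Finset.mul_sum,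
      ← Finset.sum_sub_distrib, ← Finset.sum_add_distrib]
    refine Finset.sum_congr rfl fun a _ => ?_
    split_ifs with hW
    · simp [hW]
    · ring
  have hinth : Integrable h μ := by
    refine Integrable.congr ?_ (Filter.Eventually.of_forall fun ω => (hhe ω).symm)
    exact ((hintS2.sub (hintS1.const_mul _)).add (hintS0.const_mul _) : _)
  have int2 : Integrable (fun ω => 2 * lam * S1 ω) μ := hintS1.const_mul _
  have int3 : Integrable (fun ω => lam ^ 2 * S0 ω) μ := hintS0.const_mul _
  have int1 : Integrable (fun ω => S2 ω - 2 * lam * S1 ω) μ := hintS2.sub int2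
  have hinteg : ∫ ω, h ω ∂μ = 0 := by
    rw [integral_congr_ae (Filter.Eventually.of_forall hhe)]
    rw [integral_add int1 int3, integral_sub hintS2 int2, integral_const_mul,
      integral_const_mul, hI1, ← hI0def, ← hI2def, hI2, hlamdef]
    field_simp
    ring
  have hz : h =ᵐ[μ] 0 := (integral_eq_zero_iff_of_nonneg hhnn hinth).mp hinteg
  -- identify ∫ N with I0
  have hN : (∫ ω', ((Finset.univ.filter fun b => 0 < W ω' b).card : ℝ) ∂μ) = I0 := by
    rw [hI0def]
    refine integral_congr_ae (Filter.Eventually.of_forall fun ω => ?_)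
    show ((Finset.univ.filter fun b => 0 < W ω b).card : ℝ) = S0 ω
    rw [Finset.card_filter]
    push_cast
    refine Finset.sum_congr rfl fun a _ => ?_
    by_cases hW : W ω a = 0
    · simp [hW]
    · rw [if_pos (lt_of_le_of_ne (hnonneg ω a) (Ne.symm hW)), if_neg hW]
  intro a
  filter_upwards [hz] with ω hω hpos
  have hterm : (if W ω a = 0 then (0:ℝ) else (W ω a - lam) ^ 2) = 0 :=
    (Finset.sum_eq_zero_iff_of_nonneg
      (fun b _ => by split_ifs <;> positivity)).mp hω a (Finset.mem_univ a)
  rw [if_neg (ne_of_gt hpos)] at hterm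
  have : W ω a = lam := by
    have := pow_eq_zero_iff (n := 2) (by norm_num) |>.mp hterm
    linarith
  rw [this, hN, hlamdef, one_div]
end
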